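/- arXiv:1208.6015 — 8 statements merged into one kernel-verified Lean document; each statement's English description precedes it below -/
import Mathlib

section
/- Let U ⊆ ℝⁿ_x × ℝⁿ_ξ be open, let A : U → ℂ^{m×m} be a C^∞ Hermitian-matrix-valued function, h : U → ℝ a C^∞ function, and v : U → ℂᵐ a C^∞ column-function with A v = h v and v*v = 1 at every point of U. Then at every point of U, {v*, A − h, v} = Σ_{α=1}^n [ v* (∂_{ξ_α}(A − h)) (∂_{x^α} v) − v* (∂_{x^α}(A − h)) (∂_{ξ_α} v) ], where ∂_{x^α}(A − h) denotes ∂A/∂x^α − (∂h/∂x^α)·I and similarly in ξ. -/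
open Matrix MeasureTheory

noncomputable section

/-- Phase space `ℝⁿ_x × ℝⁿ_ξ`. -/
abbrev Phase (n : ℕ) := (Fin n → ℝ) × (Fin n → ℝ)

/-- Direction of differentiation in the position variable `x^α`. -/
def dX (n : ℕ) (α : Fin n) : Phase n := (Pi.single α 1, 0)

/-- Direction of differentiation in the dual variable `ξ_α`. -/
def dXi (n : ℕ) (α : Fin n) : Phase n := (0, Pi.single α 1)

/-- Partial derivative of a real scalar function in the direction `d`. -/
def pdS {n : ℕ} (f : Phase n → ℝ) (d : Phase n) (p : Phase n) : ℝ :=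
  fderiv ℝ f p d

/-- Partial derivative of a complex scalar function in the direction `d`. -/
def pdC {n : ℕ} (f : Phase n → ℂ) (d : Phase n) (p : Phase n) : ℂ :=
  fderiv ℝ f p d

/-- Entrywise partial derivative of a column-function in the direction `d`. -/
def pdV {n m : ℕ} (v : Phase n → Fin m → ℂ) (d : Phase n) (p : Phase n) : Fin m → ℂ :=
  fun i => fderiv ℝ (fun q => v q i) p d

/-- Entrywise partial derivative of the conjugate transpose (row) `v*` of a
column-function `v`, in the direction `d`. -/
def pdVstar {n m : ℕ} (v : Phase n → Fin m → ℂ) (d : Phase n) (p : Phase n) : Fin m → ℂ :=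
  fun i => fderiv ℝ (fun q => star (v q i)) p d

/-- Entrywise partial derivative of a matrix-function in the direction `d`. -/
def pdM {n m : ℕ} (A : Phase n → Matrix (Fin m) (Fin m) ℂ) (d : Phase n) (p : Phase n) :
    Matrix (Fin m) (Fin m) ℂ :=
  Matrix.of fun i j => fderiv ℝ (fun q => A q i j) p d

/-- Second partial derivative of a real scalar function. -/
def pdS2 {n : ℕ} (f : Phase n → ℝ) (d1 d2 : Phase n) (p : Phase n) : ℝ :=
  pdS (fun q => pdS f d2 q) d1 p

/-- Entrywise second partial derivative of a matrix-function. -/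
def pdM2 {n m : ℕ} (A : Phase n → Matrix (Fin m) (Fin m) ℂ) (d1 d2 : Phase n) (p : Phase n) :
    Matrix (Fin m) (Fin m) ℂ :=
  pdM (fun q => pdM A d2 q) d1 p

/-- The scalar Poisson bracket `{v*, v}`. -/
def sbrack {n m : ℕ} (v : Phase n → Fin m → ℂ) (p : Phase n) : ℂ :=
  ∑ α : Fin n, (pdVstar v (dX n α) p ⬝ᵥ pdV v (dXi n α) p
    - pdVstar v (dXi n α) p ⬝ᵥ pdV v (dX n α) p)

/-- The Poisson bracket `{A, B}` of two matrix-functions. -/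
def mbrack {n m : ℕ} (A B : Phase n → Matrix (Fin m) (Fin m) ℂ) (p : Phase n) :
    Matrix (Fin m) (Fin m) ℂ :=
  ∑ α : Fin n, (pdM A (dX n α) p * pdM B (dXi n α) p - pdM A (dXi n α) p * pdM B (dX n α) p)

/-- The generalised Poisson bracket `{v*, Q, v}`, where `Q` is a matrix-function
(which is not differentiated). -/
def gbrack {n m : ℕ} (v : Phase n → Fin m → ℂ) (Q : Phase n → Matrix (Fin m) (Fin m) ℂ)
    (p : Phase n) : ℂ :=
  ∑ α : Fin n, (pdVstar v (dX n α) p ⬝ᵥ (Q p).mulVec (pdV v (dXi n α) p)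
    - pdVstar v (dXi n α) p ⬝ᵥ (Q p).mulVec (pdV v (dX n α) p))

/-- The orthogonal projection `v v*` onto the span of a column `v`. -/
def Proj1 {n m : ℕ} (v : Phase n → Fin m → ℂ) (p : Phase n) : Matrix (Fin m) (Fin m) ℂ :=
  vecMulVec (v p) (star (v p))

theorem statement_3 {n m : ℕ} (U : Set (Phase n)) (hU : IsOpen U)
    (A : Phase n → Matrix (Fin m) (Fin m) ℂ) (h : Phase n → ℝ) (v : Phase n → Fin m → ℂ)
    (hAsmooth : ∀ i j, ContDiffOn ℝ (⊤ : ℕ∞) (fun p => A p i j) U)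
    (hhsmooth : ContDiffOn ℝ (⊤ : ℕ∞) h U)
    (hvsmooth : ∀ i, ContDiffOn ℝ (⊤ : ℕ∞) (fun p => v p i) U)
    (hHerm : ∀ p ∈ U, (A p).IsHermitian)
    (hEig : ∀ p ∈ U, (A p).mulVec (v p) = (h p : ℂ) • v p)
    (hNorm : ∀ p ∈ U, star (v p) ⬝ᵥ v p = 1) :
    ∀ p ∈ U,
      gbrack v (fun q => A q - (h q : ℂ) • 1) p
      = ∑ α : Fin n,
          (star (v p) ⬝ᵥ (pdM A (dXi n α) p - (pdS h (dXi n α) p : ℂ) • 1).mulVec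
              (pdV v (dX n α) p)
           - star (v p) ⬝ᵥ (pdM A (dX n α) p - (pdS h (dX n α) p : ℂ) • 1).mulVec
              (pdV v (dXi n α) p)) := by
  intro p hp
  have hmem : U ∈ nhds p := hU.mem_nhds hp
  have hvd : ∀ i, DifferentiableAt ℝ (fun q => v q i) p :=
    fun i => ((hvsmooth i).differentiableOn (by simp)).differentiableAt hmem
  have hAd : ∀ i j, DifferentiableAt ℝ (fun q => A q i j) p :=
    fun i j => ((hAsmooth i j).differentiableOn (by simp)).differentiableAt hmem
  have hhd : DifferentiableAt ℝ h p :=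
    (hhsmooth.differentiableOn (by simp)).differentiableAt hmem
  have hhCd : DifferentiableAt ℝ (fun q => ((h q : ℝ) : ℂ)) p :=
    Complex.ofRealCLM.differentiableAt.comp p hhd
  have hhC : ∀ d : Phase n, fderiv ℝ (fun q => ((h q : ℝ) : ℂ)) p d = ((fderiv ℝ h p d : ℝ) : ℂ) := by
    intro d
    have := (Complex.ofRealCLM.hasFDerivAt.comp p hhd.hasFDerivAt).fderiv
    rw [show (fun q => ((h q : ℝ) : ℂ)) = Complex.ofRealCLM ∘ h from rfl, this]
    rfl
  have hstar_d : ∀ i, DifferentiableAt ℝ (fun q => star (v q i)) p := fun i => (hvd i).star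
  -- the key vanishing identity
  have hkey : ∀ (d : Phase n) (j : Fin m),
      ∑ i, (pdVstar v d p i * ((A p - (h p : ℂ) • 1) i j)
        + star (v p i) * ((pdM A d p - (pdS h d p : ℂ) • 1) i j)) = 0 := by
    intro d j
    set c : Fin m → ℂ := fun i => (1 : Matrix (Fin m) (Fin m) ℂ) i j with hc
    have hg_d : ∀ i, DifferentiableAt ℝ (fun q => A q i j - ((h q : ℝ) : ℂ) * c i) p :=
      fun i => (hAd i j).sub (hhCd.mul_const _)
    set F : Phase n → ℂ := fun q => ∑ i, star (v q i) * (A q i j - ((h q : ℝ) : ℂ) * c i) with hF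
    have hF0 : ∀ q ∈ U, F q = 0 := by
      intro q hq
      have herm : ∀ i, A q i j = star (A q j i) := fun i => (hHerm q hq).apply i j ▸ rfl
      have h1 : ∑ i, star (v q i) * A q i j = star (∑ i, A q j i * v q i) := by
        rw [star_sum]
        refine Finset.sum_congr rfl fun i _ => ?_
        rw [star_mul', ← herm i]; ring
      have h2 : ∑ i, A q j i * v q i = (h q : ℂ) * v q j := by
        have := congrFun (hEig q hq) j
        simpa [Matrix.mulVec, dotProduct] using this
      have h3 : ∑ i, star (v q i) * (((h q : ℝ) : ℂ) * c i) = (h q : ℂ) * star (v q j) := by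
        simp only [hc, Matrix.one_apply]
        rw [Finset.sum_eq_single j]
        · simp [mul_comm]
        · intro i _ hij; simp [hij]
        · simp
      simp only [hF, mul_sub]
      rw [Finset.sum_sub_distrib, h1, h2, h3]
      simp [mul_comm]
    have hFd : fderiv ℝ F p = 0 := by
      have heq : F =ᶠ[nhds p] fun _ => (0 : ℂ) := Filter.eventuallyEq_of_mem hmem hF0
      rw [heq.fderiv_eq, fderiv_fun_const]
      rfl
    have hFd' : fderiv ℝ F p d = 0 := by rw [hFd]; rfl
    have hsum : fderiv ℝ F p d
        = ∑ i, fderiv ℝ (fun q => star (v q i) * (A q i j - ((h q : ℝ) : ℂ) * c i)) p d := by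
      rw [hF]
      rw [fderiv_fun_sum (A := fun i q => star (v q i) * (A q i j - ((h q : ℝ) : ℂ) * c i)) (fun i _ => ((hstar_d i).mul (hg_d i)))]
      rw [ContinuousLinearMap.sum_apply]
    have hterm : ∀ i, fderiv ℝ (fun q => star (v q i) * (A q i j - ((h q : ℝ) : ℂ) * c i)) p d
        = pdVstar v d p i * ((A p - (h p : ℂ) • 1) i j)
          + star (v p i) * ((pdM A d p - (pdS h d p : ℂ) • 1) i j) := by
      intro i
      rw [fderiv_fun_mul (hstar_d i) (hg_d i)]
      have hsub : fderiv ℝ (fun q => A q i j - ((h q : ℝ) : ℂ) * c i) p d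
          = fderiv ℝ (fun q => A q i j) p d - ((fderiv ℝ h p d : ℝ) : ℂ) * c i := by
        rw [fderiv_fun_sub (hAd i j) (hhCd.mul_const _)]
        simp only [ContinuousLinearMap.sub_apply]
        congr 1
        rw [fderiv_mul_const hhCd]
        simp [hhC d, mul_comm]
      simp only [ContinuousLinearMap.add_apply, ContinuousLinearMap.smul_apply,
        smul_eq_mul, hsub]
      simp only [pdVstar, pdM, pdS, Matrix.sub_apply, Matrix.smul_apply, Matrix.of_apply,
        smul_eq_mul, hc]
      ring
    calc ∑ i, (pdVstar v d p i * ((A p - (h p : ℂ) • 1) i j)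
          + star (v p i) * ((pdM A d p - (pdS h d p : ℂ) • 1) i j))
        = ∑ i, fderiv ℝ (fun q => star (v q i) * (A q i j - ((h q : ℝ) : ℂ) * c i)) p d :=
          Finset.sum_congr rfl fun i _ => (hterm i).symm
      _ = fderiv ℝ F p d := hsum.symm
      _ = 0 := hFd'
  -- the bracket reduction
  have main : ∀ (d : Phase n) (w : Fin m → ℂ),
      pdVstar v d p ⬝ᵥ (A p - (h p : ℂ) • 1).mulVec w
      = - (star (v p) ⬝ᵥ (pdM A d p - (pdS h d p : ℂ) • 1).mulVec w) := by
    intro d w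
    simp only [dotProduct, Matrix.mulVec, Pi.star_apply]
    have lhs : ∑ i, pdVstar v d p i * ∑ j, (A p - (h p : ℂ) • 1) i j * w j
        = ∑ j, (∑ i, pdVstar v d p i * (A p - (h p : ℂ) • 1) i j) * w j := by
      simp only [Finset.mul_sum, Finset.sum_mul, mul_assoc]
      exact Finset.sum_comm
    have rhs : ∑ i, star (v p i) * ∑ j, (pdM A d p - (pdS h d p : ℂ) • 1) i j * w j
        = ∑ j, (∑ i, star (v p i) * (pdM A d p - (pdS h d p : ℂ) • 1) i j) * w j := by
      simp only [Finset.mul_sum, Finset.sum_mul, mul_assoc]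
      exact Finset.sum_comm
    rw [lhs, rhs, ← Finset.sum_neg_distrib]
    refine Finset.sum_congr rfl fun j _ => ?_
    rw [← neg_mul]
    congr 1
    have := hkey d j
    rw [Finset.sum_add_distrib] at this
    linear_combination this
  simp only [gbrack]
  refine Finset.sum_congr rfl fun α _ => ?_
  rw [main, main]
  ring
end
end

section
/- Let U ⊆ ℝⁿ_x × ℝⁿ_ξ be open, let A : U → ℂ^{m×m} be a C^∞ Hermitian-matrix-valued function, h : U → ℝ a C^∞ function, and v : U → ℂᵐ a C^∞ column-function with A v = h v and v*v = 1 at every point of U. Then at every point of U, {v*, A − h, v} = − Σ_{α=1}^n v* (∂²_{x^α ξ_α}(A − h)) v − 2 Σ_{α=1}^n v* (∂_{x^α}(A − h)) (∂_{ξ_α} v), where ∂_{x^α}(A − h) denotes ∂A/∂x^α − (∂h/∂x^α)·I and similarly for the other derivatives. -/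
open Matrix MeasureTheory

noncomputable section

section Aux
variable {E : Type*} [NormedAddCommGroup E] [NormedSpace ℝ E]

theorem aux_pd_smooth {F : Type*} [NormedAddCommGroup F] [NormedSpace ℝ F]
    {f : E → F} {s : Set E} (hs : IsOpen s) (hf : ContDiffOn ℝ (⊤ : ℕ∞) f s) (d : E) :
    ContDiffOn ℝ (⊤ : ℕ∞) (fun q => fderiv ℝ f q d) s :=
  (hf.fderiv_of_isOpen hs (by simp)).clm_apply contDiffOn_const

theorem aux_fderiv_sum_mul {ι : Type*} [Fintype ι] (f g : ι → E → ℂ) (p d : E)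
    (hf : ∀ j, DifferentiableAt ℝ (f j) p) (hg : ∀ j, DifferentiableAt ℝ (g j) p) :
    fderiv ℝ (fun q => ∑ j, f j q * g j q) p d
      = ∑ j, (fderiv ℝ (f j) p d * g j p + f j p * fderiv ℝ (g j) p d) := by
  rw [fderiv_fun_sum (A := fun j q => f j q * g j q) (fun j _ => (hf j).mul (hg j)), ContinuousLinearMap.sum_apply]
  refine Finset.sum_congr rfl fun j _ => ?_
  rw [fderiv_fun_mul (hf j) (hg j)]
  simp only [ContinuousLinearMap.add_apply, ContinuousLinearMap.smul_apply, smul_eq_mul]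
  ring

theorem aux_fderiv_sum_mul2 {ι : Type*} [Fintype ι] (f g u w : ι → E → ℂ) (p d : E)
    (hf : ∀ j, DifferentiableAt ℝ (f j) p) (hg : ∀ j, DifferentiableAt ℝ (g j) p)
    (hu : ∀ j, DifferentiableAt ℝ (u j) p) (hw : ∀ j, DifferentiableAt ℝ (w j) p) :
    fderiv ℝ (fun q => ∑ j, (f j q * g j q + u j q * w j q)) p d
      = ∑ j, (fderiv ℝ (f j) p d * g j p + f j p * fderiv ℝ (g j) p d
          + (fderiv ℝ (u j) p d * w j p + u j p * fderiv ℝ (w j) p d)) := by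
  rw [fderiv_fun_sum (A := fun j q => f j q * g j q + u j q * w j q) (fun j _ => ((hf j).mul (hg j)).add ((hu j).mul (hw j))),
    ContinuousLinearMap.sum_apply]
  refine Finset.sum_congr rfl fun j _ => ?_
  rw [fderiv_fun_add (f := fun q => f j q * g j q) (g := fun q => u j q * w j q) ((hf j).mul (hg j)) ((hu j).mul (hw j)), ContinuousLinearMap.add_apply,
    fderiv_fun_mul (hf j) (hg j), fderiv_fun_mul (hu j) (hw j)]
  simp only [ContinuousLinearMap.add_apply, ContinuousLinearMap.smul_apply, smul_eq_mul]
  ring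

theorem aux_fderiv_ofReal {f : E → ℝ} {q : E} (hf : DifferentiableAt ℝ f q) (d : E) :
    fderiv ℝ (fun x => (f x : ℂ)) q d = (fderiv ℝ f q d : ℂ) := by
  have h2 : HasFDerivAt (fun x => (f x : ℂ))
      (Complex.ofRealCLM.comp (fderiv ℝ f q)) q :=
    Complex.ofRealCLM.hasFDerivAt.comp q hf.hasFDerivAt
  rw [h2.fderiv]; rfl

end Aux

theorem statement_4 {n m : ℕ} (U : Set (Phase n)) (hU : IsOpen U)
    (A : Phase n → Matrix (Fin m) (Fin m) ℂ) (h : Phase n → ℝ) (v : Phase n → Fin m → ℂ)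
    (hAsmooth : ∀ i j, ContDiffOn ℝ (⊤ : ℕ∞) (fun p => A p i j) U)
    (hhsmooth : ContDiffOn ℝ (⊤ : ℕ∞) h U)
    (hvsmooth : ∀ i, ContDiffOn ℝ (⊤ : ℕ∞) (fun p => v p i) U)
    (hHerm : ∀ p ∈ U, (A p).IsHermitian)
    (hEig : ∀ p ∈ U, (A p).mulVec (v p) = (h p : ℂ) • v p)
    (hNorm : ∀ p ∈ U, star (v p) ⬝ᵥ v p = 1) :
    ∀ p ∈ U,
      gbrack v (fun q => A q - (h q : ℂ) • 1) p
      = - ∑ α : Fin n, star (v p) ⬝ᵥ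
            (pdM2 A (dX n α) (dXi n α) p - (pdS2 h (dX n α) (dXi n α) p : ℂ) • 1).mulVec (v p)
        - 2 * ∑ α : Fin n, star (v p) ⬝ᵥ
            (pdM A (dX n α) p - (pdS h (dX n α) p : ℂ) • 1).mulVec (pdV v (dXi n α) p) := by
  intro p hp
  set B : Phase n → Matrix (Fin m) (Fin m) ℂ := fun q => A q - (h q : ℂ) • 1 with hBdef
  -- basic differentiability facts
  have dA : ∀ (i j : Fin m) ⦃q : Phase n⦄, q ∈ U → DifferentiableAt ℝ (fun q' => A q' i j) q :=
    fun i j q hq => ((hAsmooth i j q hq).contDiffAt (hU.mem_nhds hq)).differentiableAt (by simp)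
  have dh : ∀ ⦃q : Phase n⦄, q ∈ U → DifferentiableAt ℝ h q :=
    fun q hq => ((hhsmooth q hq).contDiffAt (hU.mem_nhds hq)).differentiableAt (by simp)
  have dv : ∀ (i : Fin m) ⦃q : Phase n⦄, q ∈ U → DifferentiableAt ℝ (fun q' => v q' i) q :=
    fun i q hq => ((hvsmooth i q hq).contDiffAt (hU.mem_nhds hq)).differentiableAt (by simp)
  have hhC : ContDiffOn ℝ (⊤ : ℕ∞) (fun q => (h q : ℂ)) U :=
    Complex.ofRealCLM.contDiff.comp_contDiffOn hhsmooth
  have hBentry : ∀ (i j : Fin m) (q : Phase n),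
      B q i j = A q i j - (h q : ℂ) * (1 : Matrix (Fin m) (Fin m) ℂ) i j := by
    intro i j q; simp [hBdef]
  have hBs : ∀ i j, ContDiffOn ℝ (⊤ : ℕ∞) (fun q => B q i j) U := by
    intro i j
    have : (fun q => B q i j)
        = fun q => A q i j - (h q : ℂ) * (1 : Matrix (Fin m) (Fin m) ℂ) i j :=
      funext fun q => hBentry i j q
    rw [this]
    exact (hAsmooth i j).sub (hhC.mul contDiffOn_const)
  have dB : ∀ (i j : Fin m) ⦃q : Phase n⦄, q ∈ U → DifferentiableAt ℝ (fun q' => B q' i j) q :=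
    fun i j q hq => ((hBs i j q hq).contDiffAt (hU.mem_nhds hq)).differentiableAt (by simp)
  have dhC : ∀ ⦃q : Phase n⦄, q ∈ U → DifferentiableAt ℝ (fun q' => (h q' : ℂ)) q :=
    fun q hq => ((hhC q hq).contDiffAt (hU.mem_nhds hq)).differentiableAt (by simp)
  -- first derivative of B
  have pdMB_eq : ∀ (d : Phase n), ∀ q ∈ U,
      pdM B d q = pdM A d q - (pdS h d q : ℂ) • 1 := by
    intro d q hq
    ext i j
    simp only [pdM, Matrix.of_apply, Matrix.sub_apply, Matrix.smul_apply, smul_eq_mul]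
    have e1 : (fun q' => B q' i j)
        = fun q' => A q' i j - (h q' : ℂ) * (1 : Matrix (Fin m) (Fin m) ℂ) i j :=
      funext fun q' => hBentry i j q'
    rw [e1, fderiv_fun_sub (dA i j hq) ((dhC hq).mul_const _), ContinuousLinearMap.sub_apply,
      fderiv_mul_const (dhC hq)]
    simp only [ContinuousLinearMap.smul_apply, smul_eq_mul]
    rw [aux_fderiv_ofReal (dh hq)]
    simp [pdS, mul_comm]
  -- eigen relations
  have hBv : ∀ q ∈ U, B q *ᵥ v q = 0 := by
    intro q hq
    simp [hBdef, Matrix.sub_mulVec, Matrix.smul_mulVec, hEig q hq]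
  have hBherm : ∀ q ∈ U, (B q).IsHermitian := by
    intro q hq
    have : ((h q : ℂ) • (1 : Matrix (Fin m) (Fin m) ℂ)).IsHermitian := by
      unfold Matrix.IsHermitian
      rw [Matrix.conjTranspose_smul]
      simp [Complex.conj_ofReal]
    exact (hHerm q hq).sub this
  have hvB : ∀ q ∈ U, star (v q) ᵥ* B q = 0 := by
    intro q hq
    have : star (v q) ᵥ* (B q)ᴴ = 0 := by
      rw [← Matrix.star_mulVec, hBv q hq]; simp
    rwa [(hBherm q hq).eq] at this
  -- sum-form identities
  have mulVec_sum : ∀ (M : Matrix (Fin m) (Fin m) ℂ) (u : Fin m → ℂ) (i : Fin m),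
      (M *ᵥ u) i = ∑ j, M i j * u j := by
    intro M u i; simp [Matrix.mulVec, dotProduct]
  -- key1 : derivative of B v = 0
  have key1 : ∀ (d : Phase n), ∀ q ∈ U, ∀ i,
      ∑ j, (pdM B d q i j * v q j + B q i j * pdV v d q j) = 0 := by
    intro d q hq i
    have hF : (fun q' => ∑ j, B q' i j * v q' j) =ᶠ[nhds q] fun _ => (0 : ℂ) := by
      filter_upwards [hU.mem_nhds hq] with x hx
      have := congrFun (hBv x hx) i
      simpa [Matrix.mulVec, dotProduct] using this
    have h0 : fderiv ℝ (fun q' => ∑ j, B q' i j * v q' j) q = 0 := by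
      rw [hF.fderiv_eq]; exact fderiv_const_apply 0
    have h1 := aux_fderiv_sum_mul (fun j q' => B q' i j) (fun j q' => v q' j) q d
      (fun j => dB i j hq) (fun j => dv j hq)
    rw [h0] at h1
    simpa [pdM, pdV] using h1.symm
  -- key2 : derivative of v* B = 0
  have key2 : ∀ (d : Phase n), ∀ q ∈ U, ∀ j,
      ∑ i, (pdVstar v d q i * B q i j + star (v q i) * pdM B d q i j) = 0 := by
    intro d q hq j
    have hF : (fun q' => ∑ i, star (v q' i) * B q' i j) =ᶠ[nhds q] fun _ => (0 : ℂ) := by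
      filter_upwards [hU.mem_nhds hq] with x hx
      have := congrFun (hvB x hx) j
      simpa [Matrix.vecMul, dotProduct] using this
    have h0 : fderiv ℝ (fun q' => ∑ i, star (v q' i) * B q' i j) q = 0 := by
      rw [hF.fderiv_eq]; exact fderiv_const_apply 0
    have h1 := aux_fderiv_sum_mul (fun i q' => star (v q' i)) (fun i q' => B q' i j) q d
      (fun i => (dv i hq).star) (fun i => dB i j hq)
    rw [h0] at h1
    simpa [pdVstar, pdM] using h1.symm
  -- vecMul version of key2
  have key2v : ∀ (d : Phase n), ∀ q ∈ U,
      pdVstar v d q ᵥ* B q = - (star (v q) ᵥ* pdM B d q) := by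
    intro d q hq
    funext j
    have := key2 d q hq j
    rw [Finset.sum_add_distrib] at this
    have h2 : ∑ i, pdVstar v d q i * B q i j
        = - ∑ i, star (v q i) * pdM B d q i j := by linear_combination this
    simpa [Matrix.vecMul, dotProduct] using h2
  -- smoothness of first derivatives
  have hpdMBs : ∀ (d : Phase n) (i j : Fin m), ContDiffOn ℝ (⊤ : ℕ∞) (fun q => pdM B d q i j) U :=
    fun d i j => aux_pd_smooth hU (hBs i j) d
  have hpdVs : ∀ (d : Phase n) (j : Fin m), ContDiffOn ℝ (⊤ : ℕ∞) (fun q => pdV v d q j) U :=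
    fun d j => aux_pd_smooth hU (hvsmooth j) d
  have dpdMB : ∀ (d : Phase n) (i j : Fin m) ⦃q : Phase n⦄, q ∈ U →
      DifferentiableAt ℝ (fun q' => pdM B d q' i j) q :=
    fun d i j q hq => ((hpdMBs d i j q hq).contDiffAt (hU.mem_nhds hq)).differentiableAt (by simp)
  have dpdV : ∀ (d : Phase n) (j : Fin m) ⦃q : Phase n⦄, q ∈ U →
      DifferentiableAt ℝ (fun q' => pdV v d q' j) q :=
    fun d j q hq => ((hpdVs d j q hq).contDiffAt (hU.mem_nhds hq)).differentiableAt (by simp)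
  -- key3 : second derivative of B v = 0, dotted with v*
  have key3 : ∀ (d1 d2 : Phase n), ∀ q ∈ U,
      star (v q) ⬝ᵥ (pdM2 B d1 d2 q *ᵥ v q)
        = - (star (v q) ⬝ᵥ (pdM B d2 q *ᵥ pdV v d1 q))
          - (star (v q) ⬝ᵥ (pdM B d1 q *ᵥ pdV v d2 q)) := by
    intro d1 d2 q hq
    -- componentwise second-derivative identity
    have comp : ∀ i, ∑ j, (pdM2 B d1 d2 q i j * v q j + pdM B d2 q i j * pdV v d1 q j
        + (pdM B d1 q i j * pdV v d2 q j
          + B q i j * fderiv ℝ (fun q' => pdV v d2 q' j) q d1)) = 0 := by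
      intro i
      have hF : (fun q' => ∑ j, (pdM B d2 q' i j * v q' j + B q' i j * pdV v d2 q' j))
          =ᶠ[nhds q] fun _ => (0 : ℂ) := by
        filter_upwards [hU.mem_nhds hq] with x hx
        exact key1 d2 x hx i
      have h0 : fderiv ℝ
          (fun q' => ∑ j, (pdM B d2 q' i j * v q' j + B q' i j * pdV v d2 q' j)) q = 0 := by
        rw [hF.fderiv_eq]; exact fderiv_const_apply 0
      have h1 := aux_fderiv_sum_mul2 (fun j q' => pdM B d2 q' i j) (fun j q' => v q' j)
        (fun j q' => B q' i j) (fun j q' => pdV v d2 q' j) q d1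
        (fun j => dpdMB d2 i j hq) (fun j => dv j hq)
        (fun j => dB i j hq) (fun j => dpdV d2 j hq)
      rw [h0] at h1
      simpa [pdM2, pdM, pdV] using h1.symm
    -- vector form
    have vecform : pdM2 B d1 d2 q *ᵥ v q + pdM B d2 q *ᵥ pdV v d1 q
        + pdM B d1 q *ᵥ pdV v d2 q
        + B q *ᵥ (fun j => fderiv ℝ (fun q' => pdV v d2 q' j) q d1) = 0 := by
      funext i
      have := comp i
      simp only [Finset.sum_add_distrib] at this
      simp only [Pi.add_apply, Pi.zero_apply, mulVec_sum]
      linear_combination this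
    have hdot := congrArg (fun u => star (v q) ⬝ᵥ u) vecform
    simp only [dotProduct_add, dotProduct_zero] at hdot
    rw [Matrix.dotProduct_mulVec (star (v q)) (B q), hvB q hq, zero_dotProduct] at hdot
    linear_combination hdot
  -- second derivative of B in terms of A and h
  have pdM2B_eq : ∀ (d1 d2 : Phase n), ∀ q ∈ U,
      pdM2 B d1 d2 q = pdM2 A d1 d2 q - (pdS2 h d1 d2 q : ℂ) • 1 := by
    intro d1 d2 q hq
    ext i j
    have hF : (fun q' => pdM B d2 q' i j) =ᶠ[nhds q]
        (fun q' => pdM A d2 q' i j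
          - (pdS h d2 q' : ℂ) * (1 : Matrix (Fin m) (Fin m) ℂ) i j) := by
      filter_upwards [hU.mem_nhds hq] with x hx
      have := pdMB_eq d2 x hx
      rw [this]
      simp
    have dpdMA : DifferentiableAt ℝ (fun q' => pdM A d2 q' i j) q :=
      (((aux_pd_smooth hU (hAsmooth i j) d2) q hq).contDiffAt
        (hU.mem_nhds hq)).differentiableAt (by simp)
    have dpdSh : DifferentiableAt ℝ (fun q' => pdS h d2 q') q :=
      (((aux_pd_smooth hU hhsmooth d2) q hq).contDiffAt
        (hU.mem_nhds hq)).differentiableAt (by simp)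
    have dpdShC : DifferentiableAt ℝ (fun q' => ((pdS h d2 q' : ℝ) : ℂ)) q := by
      exact Complex.ofRealCLM.differentiable.differentiableAt.comp q dpdSh
    have step : fderiv ℝ (fun q' => pdM B d2 q' i j) q d1
        = fderiv ℝ (fun q' => pdM A d2 q' i j) q d1
          - (fderiv ℝ (fun q' => pdS h d2 q') q d1 : ℂ)
            * (1 : Matrix (Fin m) (Fin m) ℂ) i j := by
      rw [hF.fderiv_eq, fderiv_fun_sub dpdMA (dpdShC.mul_const _), ContinuousLinearMap.sub_apply,
        fderiv_mul_const dpdShC]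
      simp only [ContinuousLinearMap.smul_apply, smul_eq_mul]
      rw [aux_fderiv_ofReal dpdSh]
      ring
    simpa [pdM2, pdM, pdS2, pdS, Matrix.sub_apply, Matrix.smul_apply, smul_eq_mul] using step
  -- assemble
  have hptsB : ∀ (d w : Phase n → Fin m → ℂ) (q : Phase n), True := fun _ _ _ => trivial
  clear hptsB
  have term : ∀ (d : Phase n) (w : Fin m → ℂ),
      pdVstar v d p ⬝ᵥ (B p *ᵥ w) = - (star (v p) ⬝ᵥ (pdM B d p *ᵥ w)) := by
    intro d w
    rw [Matrix.dotProduct_mulVec, key2v d p hp, neg_dotProduct,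
      ← Matrix.dotProduct_mulVec]
  have LHS : gbrack v B p
      = ∑ α : Fin n, (star (v p) ⬝ᵥ (pdM B (dXi n α) p *ᵥ pdV v (dX n α) p)
          - star (v p) ⬝ᵥ (pdM B (dX n α) p *ᵥ pdV v (dXi n α) p)) := by
    unfold gbrack
    refine Finset.sum_congr rfl fun α _ => ?_
    rw [term (dX n α) (pdV v (dXi n α) p), term (dXi n α) (pdV v (dX n α) p)]
    ring
  have RHSterm : ∀ α : Fin n,
      star (v p) ⬝ᵥ ((pdM2 A (dX n α) (dXi n α) p
          - (pdS2 h (dX n α) (dXi n α) p : ℂ) • 1) *ᵥ v p)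
        = - (star (v p) ⬝ᵥ (pdM B (dXi n α) p *ᵥ pdV v (dX n α) p))
          - (star (v p) ⬝ᵥ (pdM B (dX n α) p *ᵥ pdV v (dXi n α) p)) := by
    intro α
    rw [← pdM2B_eq (dX n α) (dXi n α) p hp]
    exact key3 (dX n α) (dXi n α) p hp
  have RHSterm2 : ∀ α : Fin n,
      star (v p) ⬝ᵥ ((pdM A (dX n α) p - (pdS h (dX n α) p : ℂ) • 1) *ᵥ pdV v (dXi n α) p)
        = star (v p) ⬝ᵥ (pdM B (dX n α) p *ᵥ pdV v (dXi n α) p) := by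
    intro α
    rw [← pdMB_eq (dX n α) p hp]
  rw [LHS]
  simp only [RHSterm, RHSterm2]
  rw [Finset.sum_sub_distrib]
  have expand : ∑ α : Fin n, (- (star (v p) ⬝ᵥ (pdM B (dXi n α) p *ᵥ pdV v (dX n α) p))
      - star (v p) ⬝ᵥ (pdM B (dX n α) p *ᵥ pdV v (dXi n α) p))
      = (- ∑ α : Fin n, star (v p) ⬝ᵥ (pdM B (dXi n α) p *ᵥ pdV v (dX n α) p))
        - ∑ α : Fin n, star (v p) ⬝ᵥ (pdM B (dX n α) p *ᵥ pdV v (dXi n α) p) := by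
    rw [Finset.sum_sub_distrib, Finset.sum_neg_distrib]
  rw [expand]
  ring
end
end

section
/- Let v^{(1)},…,v^{(m)} be an orthonormal basis of ℂᵐ, let P^{(j)} := v^{(j)} [v^{(j)}]* be the corresponding orthogonal projections, let h^{(1)},…,h^{(m)} be pairwise distinct real numbers, and let B^{(1)},…,B^{(m)} be arbitrary complex m×m matrices. Then the system of equations (h^{(l)} − h^{(j)}) P^{(l)} u^{(j)} + P^{(l)} B^{(j)} = 0 for all l ≠ j, together with Σ_{j=1}^m u^{(j)} = 0, has a unique solution in complex m×m matrices u^{(1)},…,u^{(m)}, namely u^{(j)} = Σ_{l ≠ j} (P^{(l)} B^{(j)} + P^{(j)} B^{(l)}) / (h^{(j)} − h^{(l)}). -/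
open Matrix MeasureTheory

noncomputable section

/-!
The matrices `P l` form a complete family of orthogonal idempotents, so a matrix `x` vanishes
as soon as every `P l * x` does. For a difference of two solutions the off-diagonal equations
kill `P l * (u j - u' j)` for `l ≠ j`, and multiplying `∑ j, (u j - u' j) = 0` by `P j` kills
the diagonal block; hence the system has at most one solution. The explicit candidate solves
it: left multiplication by `P l` picks out a single term of its defining sum, and its terms are
antisymmetric under `j ↔ l`, so the candidates sum to zero.
-/

open Finset

theorem Finset.sum_sum_eq_zero_of_antisymm {ι M : Type*} [Fintype ι] [AddCommGroup M]
    {f : ι → ι → M} (hf : ∀ i j, f i j = -f j i) (hdiag : ∀ i, f i i = 0) :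
    ∑ i, ∑ j, f i j = 0 := by
  rw [← Finset.sum_product']
  refine Finset.sum_ninvolution Prod.swap (fun p => ?_) (fun p hp hswap => ?_)
    (fun _ => mem_univ _) Prod.swap_swap
  · rw [hf p.1 p.2]
    exact neg_add_cancel _
  · obtain ⟨i, j⟩ := p
    obtain rfl : j = i := congrArg Prod.fst hswap
    exact hp (hdiag j)

theorem CompleteOrthogonalIdempotents.eq_zero_of_forall_mul_eq_zero {R I : Type*} [Semiring R]
    [Fintype I] {e : I → R} (he : CompleteOrthogonalIdempotents e) {x : R}
    (hx : ∀ i, e i * x = 0) : x = 0 := by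
  rw [← one_mul x, ← he.complete, Finset.sum_mul]
  exact Finset.sum_eq_zero fun i _ => hx i

theorem Matrix.completeOrthogonalIdempotents_vecMulVec_star {n : Type*} [Fintype n]
    [DecidableEq n] {R : Type*} [CommRing R] [StarRing R] (v : n → n → R)
    (hv : ∀ j k, star (v j) ⬝ᵥ v k = if j = k then 1 else 0) :
    CompleteOrthogonalIdempotents fun j => vecMulVec (v j) (star (v j)) := by
  refine (CompleteOrthogonalIdempotents.iff_ortho_complete).2 ⟨fun j k hjk => ?_, ?_⟩
  · simp [vecMulVec_mul_vecMulVec, hv j k, hjk]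
  · set N : Matrix n n R := (of v)ᵀ
    have hNN : Nᴴ * N = 1 := by
      ext j k
      simpa [N, mul_apply, dotProduct, one_apply] using hv j k
    calc ∑ j, vecMulVec (v j) (star (v j)) = N * Nᴴ := by
          ext i k
          simp [N, mul_apply, vecMulVec_apply, Matrix.sum_apply]
      _ = 1 := mul_eq_one_comm.mp hNN

theorem CompleteOrthogonalIdempotents.eq_zero_of_mul_eq_zero_of_sum_eq_zero {R ι : Type*}
    [Semiring R] [Fintype ι] {P : ι → R} (hP : CompleteOrthogonalIdempotents P) {w : ι → R}
    (hoff : ∀ l j, l ≠ j → P l * w j = 0) (hsum : ∑ j, w j = 0) : w = 0 := by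
  funext j
  refine hP.eq_zero_of_forall_mul_eq_zero fun l => ?_
  obtain rfl | hlj := eq_or_ne l j
  · calc P l * w l = ∑ k, P l * w k :=
          (Finset.sum_eq_single l (fun k _ hk => hoff l k hk.symm) (by simp)).symm
      _ = 0 := by rw [← Finset.mul_sum, hsum, mul_zero]
  · exact hoff l j hlj

section OffDiagSystem

variable {ι 𝕜 A : Type*} [Fintype ι] [Field 𝕜] [Ring A] [Algebra 𝕜 A]

def OffDiagSystem (P : ι → A) (h : ι → 𝕜) (B u : ι → A) : Prop :=
  (∀ l j, l ≠ j → (h l - h j) • (P l * u j) + P l * B j = 0) ∧ ∑ j, u j = 0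

theorem OffDiagSystem.unique {P : ι → A} (hP : CompleteOrthogonalIdempotents P) {h : ι → 𝕜}
    (hh : Function.Injective h) {B u u' : ι → A} (hu : OffDiagSystem P h B u)
    (hu' : OffDiagSystem P h B u') : u = u' := by
  rw [← sub_eq_zero]
  refine hP.eq_zero_of_mul_eq_zero_of_sum_eq_zero (fun l j hlj => ?_) ?_
  · have hscaled : (h l - h j) • (P l * (u - u') j) = 0 := by
      rw [Pi.sub_apply, mul_sub, smul_sub, ← add_sub_add_right_eq_sub _ _ (P l * B j),
        hu.1 l j hlj, hu'.1 l j hlj, sub_zero]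
    exact (smul_eq_zero.mp hscaled).resolve_left (sub_ne_zero.mpr (hh.ne hlj))
  · simp only [Pi.sub_apply, Finset.sum_sub_distrib, hu.2, hu'.2, sub_zero]

variable [DecidableEq ι]

def offDiagSolution (P : ι → A) (h : ι → 𝕜) (B : ι → A) (j : ι) : A :=
  ∑ l ∈ univ.filter (fun l => l ≠ j), (h j - h l)⁻¹ • (P l * B j + P j * B l)

theorem mul_offDiagSolution_of_ne {P : ι → A} (hP : OrthogonalIdempotents P) (h : ι → 𝕜)
    (B : ι → A) {l j : ι} (hlj : l ≠ j) :
    P l * offDiagSolution P h B j = (h j - h l)⁻¹ • (P l * B j) := by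
  have hterm : ∀ k, P l * ((h j - h k)⁻¹ • (P k * B j + P j * B k)) =
      if k = l then (h j - h l)⁻¹ • (P l * B j) else 0 := by
    intro k
    rw [mul_smul_comm, mul_add, ← mul_assoc, ← mul_assoc, hP.mul_eq, hP.mul_eq, if_neg hlj,
      zero_mul, add_zero]
    obtain rfl | hkl := eq_or_ne k l
    · simp
    · simp [hkl.symm, hkl]
  rw [offDiagSolution, Finset.mul_sum, Finset.sum_congr rfl fun k _ => hterm k,
    Finset.sum_ite_eq']
  simp [hlj]

theorem sum_offDiagSolution (P : ι → A) (h : ι → 𝕜) (B : ι → A) :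
    ∑ j, offDiagSolution P h B j = 0 := by
  -- the excluded diagonal terms vanish anyway, as `(h j - h j)⁻¹ = 0⁻¹ = 0`
  have hfull : ∀ j,
      offDiagSolution P h B j = ∑ l, (h j - h l)⁻¹ • (P l * B j + P j * B l) :=
    fun j => Finset.sum_filter_of_ne fun l _ hne hlj => hne (by simp [hlj])
  simp only [hfull]
  refine Finset.sum_sum_eq_zero_of_antisymm (fun j l => ?_) (fun j => by simp)
  rw [← neg_sub (h l), inv_neg, neg_smul, add_comm]

theorem offDiagSystem_offDiagSolution {P : ι → A} (hP : OrthogonalIdempotents P)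
    {h : ι → 𝕜} (hh : Function.Injective h) (B : ι → A) :
    OffDiagSystem P h B (offDiagSolution P h B) := by
  refine ⟨fun l j hlj => ?_, sum_offDiagSolution P h B⟩
  rw [mul_offDiagSolution_of_ne hP h B hlj, smul_smul, ← neg_sub (h j), neg_mul,
    mul_inv_cancel₀ (sub_ne_zero.mpr (hh.ne hlj.symm)), neg_one_smul, neg_add_cancel]

theorem offDiagSystem_iff {P : ι → A} (hP : CompleteOrthogonalIdempotents P)
    {h : ι → 𝕜} (hh : Function.Injective h) (B u : ι → A) :
    OffDiagSystem P h B u ↔ u = offDiagSolution P h B := by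
  have hsol := offDiagSystem_offDiagSolution hP.toOrthogonalIdempotents hh B
  exact ⟨fun hu => hu.unique hP hh hsol, fun hu => hu ▸ hsol⟩

end OffDiagSystem

theorem statement_5 {m : ℕ} (v : Fin m → Fin m → ℂ)
    (hON : ∀ j k, star (v j) ⬝ᵥ v k = if j = k then 1 else 0)
    (h : Fin m → ℝ) (hdist : Function.Injective h)
    (B : Fin m → Matrix (Fin m) (Fin m) ℂ)
    (P : Fin m → Matrix (Fin m) (Fin m) ℂ)
    (hP : ∀ j, P j = vecMulVec (v j) (star (v j)))
    (u : Fin m → Matrix (Fin m) (Fin m) ℂ) :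
    ((∀ l j, l ≠ j → ((h l : ℂ) - (h j : ℂ)) • (P l * u j) + P l * B j = 0)
        ∧ ∑ j, u j = 0)
    ↔ (∀ j, u j = ∑ l ∈ Finset.univ.filter (fun l => l ≠ j),
        ((h j : ℂ) - (h l : ℂ))⁻¹ • (P l * B j + P j * B l)) := by
  obtain rfl : P = fun j => vecMulVec (v j) (star (v j)) := funext hP
  exact (offDiagSystem_iff (completeOrthogonalIdempotents_vecMulVec_star v hON)
    (Complex.ofReal_injective.comp hdist) B u).trans funext_iff
end
end

section
/- Let U ⊆ ℝⁿ_x × ℝⁿ_ξ be open, let v^{(1)},…,v^{(m)} : U → ℂᵐ be C^∞ functions whose values at each point of U form an orthonormal basis of ℂᵐ, let P^{(j)} := v^{(j)} [v^{(j)}]*, let h^{(1)},…,h^{(m)} : U → ℝ be C^∞ functions that are pairwise distinct at every point of U, and set A₁ := Σ_k h^{(k)} P^{(k)}. Let A₀ : U → ℂ^{m×m} be any C^∞ matrix-function and put A_sub := A₀ + (i/2) Σ_α ∂²A₁/∂x^α∂ξ_α. For each j define the scalar function q^{(j)} := [v^{(j)}]* A_sub v^{(j)} − (i/2){[v^{(j)}]*,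 A₁ − h^{(j)}, v^{(j)}} − i [v^{(j)}]* {v^{(j)}, h^{(j)}}, the matrix-function B^{(j)} := (A₀ − q^{(j)} − (i/2) Σ_α ∂²h^{(j)}/∂x^α∂ξ_α + i Σ_α ∂²A₁/∂x^α∂ξ_α) P^{(j)} − i Σ_α (∂h^{(j)}/∂ξ_α) ∂P^{(j)}/∂x^α + i Σ_α (∂A₁/∂x^α) ∂P^{(j)}/∂ξ_α, and the matrix-function u^{(j)} := Σ_{l ≠ j} (P^{(l)} B^{(j)} + P^{(j)} B^{(l)}) / (h^{(j)} − h^{(l)}). Then at every point of U, u^{(j)} − (i/2) Σ_α ∂²P^{(j)}/∂x^α∂ξ_α = (1/2) Σ_{l ≠ j} [ P^{(l)}(2 A_sub P^{(j)} + i {A₁ + h^{(j)}, P^{(j)}}) + P^{(j)}(2 A_sub P^{(l)} + i {A₁ + h^{(l)}, P^{(l)}}) ] / (h^{(j)} − h^{(l)}), where A₁ + h^{(j)} abbreviates A₁ + h^{(j)}·I. -/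
open Matrix MeasureTheory

noncomputable section

/-- The matrix-function `A₁ := Σ_k h^{(k)} P^{(k)}`. -/
def A1 {n m : ℕ} (h : Fin m → Phase n → ℝ) (v : Fin m → Phase n → Fin m → ℂ)
    (p : Phase n) : Matrix (Fin m) (Fin m) ℂ :=
  ∑ k, (h k p : ℂ) • Proj1 (v k) p

/-- The subprincipal symbol `A_sub := A₀ + (i/2) Σ_α ∂²A₁/∂x^α∂ξ_α`. -/
def Asub {n m : ℕ} (A₀ : Phase n → Matrix (Fin m) (Fin m) ℂ)
    (h : Fin m → Phase n → ℝ) (v : Fin m → Phase n → Fin m → ℂ)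
    (p : Phase n) : Matrix (Fin m) (Fin m) ℂ :=
  A₀ p + (Complex.I / 2) • ∑ α : Fin n, pdM2 (A1 h v) (dX n α) (dXi n α) p

/-- The scalar function
`q^{(j)} := [v^{(j)}]* A_sub v^{(j)} − (i/2){[v^{(j)}]*, A₁ − h^{(j)}, v^{(j)}}
  − i [v^{(j)}]* {v^{(j)}, h^{(j)}}`. -/
def qfun {n m : ℕ} (A₀ : Phase n → Matrix (Fin m) (Fin m) ℂ)
    (h : Fin m → Phase n → ℝ) (v : Fin m → Phase n → Fin m → ℂ)
    (j : Fin m) (p : Phase n) : ℂ :=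
  star (v j p) ⬝ᵥ (Asub A₀ h v p).mulVec (v j p)
  - (Complex.I / 2) * gbrack (v j) (fun q => A1 h v q - (h j q : ℂ) • 1) p
  - Complex.I * (star (v j p) ⬝ᵥ
      (∑ α : Fin n, ((pdS (h j) (dXi n α) p : ℂ) • pdV (v j) (dX n α) p
        - (pdS (h j) (dX n α) p : ℂ) • pdV (v j) (dXi n α) p)))

/-- The matrix-function `B^{(j)}`. -/
def Bfun {n m : ℕ} (A₀ : Phase n → Matrix (Fin m) (Fin m) ℂ)
    (h : Fin m → Phase n → ℝ) (v : Fin m → Phase n → Fin m → ℂ)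
    (j : Fin m) (p : Phase n) : Matrix (Fin m) (Fin m) ℂ :=
  (A₀ p - qfun A₀ h v j p • 1
      - ((Complex.I / 2) * ((∑ α : Fin n, pdS2 (h j) (dX n α) (dXi n α) p : ℝ) : ℂ)) • 1
      + Complex.I • ∑ α : Fin n, pdM2 (A1 h v) (dX n α) (dXi n α) p) * Proj1 (v j) p
  - Complex.I • ∑ α : Fin n, (pdS (h j) (dXi n α) p : ℂ) • pdM (Proj1 (v j)) (dX n α) p
  + Complex.I • ∑ α : Fin n, pdM (A1 h v) (dX n α) p * pdM (Proj1 (v j)) (dXi n α) p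

/-- The matrix-function
`u^{(j)} := Σ_{l ≠ j} (P^{(l)} B^{(j)} + P^{(j)} B^{(l)}) / (h^{(j)} − h^{(l)})`. -/
def ufun {n m : ℕ} (A₀ : Phase n → Matrix (Fin m) (Fin m) ℂ)
    (h : Fin m → Phase n → ℝ) (v : Fin m → Phase n → Fin m → ℂ)
    (j : Fin m) (p : Phase n) : Matrix (Fin m) (Fin m) ℂ :=
  ∑ l ∈ Finset.univ.filter (fun l => l ≠ j),
    ((h j p : ℂ) - (h l p : ℂ))⁻¹ • (Proj1 (v l) p * Bfun A₀ h v j p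
      + Proj1 (v j) p * Bfun A₀ h v l p)


set_option linter.unusedSectionVars false

namespace Aux

variable {n m : ℕ}

/-- entrywise differentiability of a matrix function -/
def MDiff (A : Phase n → Matrix (Fin m) (Fin m) ℂ) (p : Phase n) : Prop :=
  ∀ i j, DifferentiableAt ℝ (fun q => A q i j) p

lemma pdM_congr {A B : Phase n → Matrix (Fin m) (Fin m) ℂ} {U : Set (Phase n)}
    (hU : IsOpen U) {p : Phase n} (hp : p ∈ U) (hAB : ∀ q ∈ U, A q = B q) (d : Phase n) :
    pdM A d p = pdM B d p := by
  ext i j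
  have hev : (fun q => A q i j) =ᶠ[nhds p] (fun q => B q i j) :=
    Filter.eventually_of_mem (hU.mem_nhds hp) (fun q hq => by show A q i j = B q i j; rw [hAB q hq])
  simp only [pdM, Matrix.of_apply]
  rw [hev.fderiv_eq]

lemma pdM_const (C : Matrix (Fin m) (Fin m) ℂ) (d p : Phase n) :
    pdM (fun _ => C) d p = 0 := by
  ext i j; simp [pdM]

lemma pdM_add {A B : Phase n → Matrix (Fin m) (Fin m) ℂ} {p : Phase n}
    (hA : MDiff A p) (hB : MDiff B p) (d : Phase n) :
    pdM (fun q => A q + B q) d p = pdM A d p + pdM B d p := by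
  ext i j
  simp only [pdM, Matrix.of_apply, Matrix.add_apply]
  rw [fderiv_fun_add (hA i j) (hB i j)]; rfl

lemma pdM_sum {ι : Type*} (s : Finset ι) {A : ι → Phase n → Matrix (Fin m) (Fin m) ℂ}
    {p : Phase n} (hA : ∀ k ∈ s, MDiff (A k) p) (d : Phase n) :
    pdM (fun q => ∑ k ∈ s, A k q) d p = ∑ k ∈ s, pdM (A k) d p := by
  ext i j
  simp only [pdM, Matrix.of_apply, Matrix.sum_apply]
  rw [fderiv_fun_sum (fun k hk => hA k hk i j)]; simp

lemma pdM_mul {A B : Phase n → Matrix (Fin m) (Fin m) ℂ} {p : Phase n}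
    (hA : MDiff A p) (hB : MDiff B p) (d : Phase n) :
    pdM (fun q => A q * B q) d p = pdM A d p * B p + A p * pdM B d p := by
  ext i j
  simp only [pdM, Matrix.of_apply, Matrix.add_apply, Matrix.mul_apply]
  rw [fderiv_fun_sum (fun k _ => (hA i k).fun_mul (hB k j))]
  rw [ContinuousLinearMap.sum_apply]
  rw [← Finset.sum_add_distrib]
  refine Finset.sum_congr rfl (fun k _ => ?_)
  rw [fderiv_fun_mul (hA i k) (hB k j)]
  simp only [ContinuousLinearMap.add_apply, ContinuousLinearMap.smul_apply, smul_eq_mul]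
  ring

lemma pdM_smul {f : Phase n → ℂ} {A : Phase n → Matrix (Fin m) (Fin m) ℂ} {p : Phase n}
    (hf : DifferentiableAt ℝ f p) (hA : MDiff A p) (d : Phase n) :
    pdM (fun q => f q • A q) d p = pdC f d p • A p + f p • pdM A d p := by
  ext i j
  simp only [pdM, pdC, Matrix.of_apply, Matrix.add_apply, Matrix.smul_apply, smul_eq_mul]
  rw [fderiv_fun_mul hf (hA i j)]
  simp only [ContinuousLinearMap.add_apply, ContinuousLinearMap.smul_apply, smul_eq_mul]
  ring

lemma pdC_ofReal {g : Phase n → ℝ} {p : Phase n} (hg : DifferentiableAt ℝ g p) (d : Phase n) :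
    pdC (fun q => (g q : ℂ)) d p = (pdS g d p : ℂ) := by
  simp only [pdC, pdS]
  have : fderiv ℝ (fun q => (g q : ℂ)) p = Complex.ofRealCLM.comp (fderiv ℝ g p) :=
    (Complex.ofRealCLM.hasFDerivAt.comp p hg.hasFDerivAt).fderiv
  rw [this]; rfl

lemma diffAt_of_contDiffOn {U : Set (Phase n)} (hU : IsOpen U) {p : Phase n} (hp : p ∈ U)
    {F : Type*} [NormedAddCommGroup F] [NormedSpace ℝ F] {f : Phase n → F}
    (hf : ContDiffOn ℝ (⊤ : ℕ∞) f U) : DifferentiableAt ℝ f p :=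
  (hf.contDiffAt (hU.mem_nhds hp)).differentiableAt (by simp)

lemma contDiffOn_pdM {U : Set (Phase n)} (hU : IsOpen U)
    {A : Phase n → Matrix (Fin m) (Fin m) ℂ}
    (hA : ∀ i j, ContDiffOn ℝ (⊤ : ℕ∞) (fun q => A q i j) U) (d : Phase n) :
    ∀ i j, ContDiffOn ℝ (⊤ : ℕ∞) (fun q => pdM A d q i j) U := by
  intro i j
  have : (fun q => pdM A d q i j) = fun q => (fderiv ℝ (fun q' => A q' i j) q) d := rfl
  rw [this]
  exact ((hA i j).fderiv_of_isOpen hU (by simp)).clm_apply contDiffOn_const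

lemma mdiff_of_contDiffOn {U : Set (Phase n)} (hU : IsOpen U) {p : Phase n} (hp : p ∈ U)
    {A : Phase n → Matrix (Fin m) (Fin m) ℂ}
    (hA : ∀ i j, ContDiffOn ℝ (⊤ : ℕ∞) (fun q => A q i j) U) : MDiff A p :=
  fun i j => diffAt_of_contDiffOn hU hp (hA i j)



section main

variable {n m : ℕ} {U : Set (Phase n)}
  {v : Fin m → Phase n → Fin m → ℂ} {h : Fin m → Phase n → ℝ}

lemma proj_smooth (hv : ∀ j i, ContDiffOn ℝ (⊤ : ℕ∞) (fun p => v j p i) U) (k : Fin m) :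
    ∀ i j, ContDiffOn ℝ (⊤ : ℕ∞) (fun q => Proj1 (v k) q i j) U := by
  intro i j
  have hs : ContDiffOn ℝ (⊤ : ℕ∞) (fun q => star (v k q j)) U :=
    ((starL ℝ : ℂ ≃L[ℝ] ℂ).contDiff).comp_contDiffOn (hv k j)
  have : (fun q => Proj1 (v k) q i j) = fun q => v k q i * star (v k q j) := by
    funext q; simp [Proj1, Matrix.vecMulVec_apply]
  rw [this]
  exact (hv k i).mul hs

lemma A1_smooth (hv : ∀ j i, ContDiffOn ℝ (⊤ : ℕ∞) (fun p => v j p i) U)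
    (hh : ∀ j, ContDiffOn ℝ (⊤ : ℕ∞) (h j) U) :
    ∀ i j, ContDiffOn ℝ (⊤ : ℕ∞) (fun q => A1 h v q i j) U := by
  intro i j
  have : (fun q => A1 h v q i j) = fun q => ∑ k, (h k q : ℂ) * Proj1 (v k) q i j := by
    funext q; simp [A1, Matrix.sum_apply]
  rw [this]
  exact ContDiffOn.sum fun k _ =>
    ((Complex.ofRealCLM.contDiff).comp_contDiffOn (hh k)).mul (proj_smooth hv k i j)

lemma proj_mul (hON : ∀ p ∈ U, ∀ j k, star (v j p) ⬝ᵥ v k p = if j = k then 1 else 0)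
    {q : Phase n} (hq : q ∈ U) (k l : Fin m) :
    Proj1 (v k) q * Proj1 (v l) q = if k = l then Proj1 (v k) q else 0 := by
  have key : Proj1 (v k) q * Proj1 (v l) q
      = (star (v k q) ⬝ᵥ v l q) • Matrix.vecMulVec (v k q) (star (v l q)) := by
    ext i j
    simp only [Proj1, Matrix.mul_apply, Matrix.vecMulVec_apply, Matrix.smul_apply,
      dotProduct, smul_eq_mul, Finset.sum_mul, Pi.star_apply]
    exact Finset.sum_congr rfl fun r _ => by ring
  rw [key, hON q hq k l]
  by_cases hkl : k = l
  · subst hkl; simp [Proj1]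
  · simp [hkl]

lemma proj_mul_ne (hON : ∀ p ∈ U, ∀ j k, star (v j p) ⬝ᵥ v k p = if j = k then 1 else 0)
    {q : Phase n} (hq : q ∈ U) {k l : Fin m} (hkl : k ≠ l) :
    Proj1 (v k) q * Proj1 (v l) q = 0 := by
  rw [proj_mul hON hq k l, if_neg hkl]

lemma proj_sum (hON : ∀ p ∈ U, ∀ j k, star (v j p) ⬝ᵥ v k p = if j = k then 1 else 0)
    {q : Phase n} (hq : q ∈ U) :
    ∑ k, Proj1 (v k) q = 1 := by
  classical
  set V : Matrix (Fin m) (Fin m) ℂ := Matrix.of fun i k => v k q i with hV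
  have h1 : Vᴴ * V = 1 := by
    ext a b
    simp only [Matrix.mul_apply, Matrix.conjTranspose_apply, hV, Matrix.of_apply,
      Matrix.one_apply]
    have := hON q hq a b
    simpa [dotProduct] using this
  have h2 : V * Vᴴ = 1 := mul_eq_one_comm.mp h1
  ext i j
  simp only [Matrix.sum_apply, Proj1, Matrix.vecMulVec_apply, Pi.star_apply]
  have := congrFun (congrFun h2 i) j
  simpa [Matrix.mul_apply, hV, Matrix.conjTranspose_apply] using this

lemma A1_mul_proj (hON : ∀ p ∈ U, ∀ j k, star (v j p) ⬝ᵥ v k p = if j = k then 1 else 0)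
    {q : Phase n} (hq : q ∈ U) (j : Fin m) :
    A1 h v q * Proj1 (v j) q = (h j q : ℂ) • Proj1 (v j) q := by
  rw [A1, Finset.sum_mul]
  rw [Finset.sum_eq_single j]
  · rw [smul_mul_assoc, proj_mul hON hq j j, if_pos rfl]
  · intro k _ hkj
    rw [smul_mul_assoc, proj_mul hON hq k j, if_neg hkj, smul_zero]
  · simp

lemma proj_mul_A1 (hON : ∀ p ∈ U, ∀ j k, star (v j p) ⬝ᵥ v k p = if j = k then 1 else 0)
    {q : Phase n} (hq : q ∈ U) (j : Fin m) :
    Proj1 (v j) q * A1 h v q = (h j q : ℂ) • Proj1 (v j) q := by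
  rw [A1, Finset.mul_sum]
  rw [Finset.sum_eq_single j]
  · rw [mul_smul_comm, proj_mul hON hq j j, if_pos rfl]
  · intro k _ hkj
    rw [mul_smul_comm, proj_mul hON hq j k, if_neg (Ne.symm hkj), smul_zero]
  · simp

end main
section deriv

variable {n m : ℕ} {U : Set (Phase n)}
  {v : Fin m → Phase n → Fin m → ℂ} {h : Fin m → Phase n → ℝ}

lemma MDiff.mul {A B : Phase n → Matrix (Fin m) (Fin m) ℂ} {p : Phase n}
    (hA : MDiff A p) (hB : MDiff B p) : MDiff (fun q => A q * B q) p := by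
  intro i j
  have : (fun q => (A q * B q) i j) = fun q => ∑ k, A q i k * B q k j := by
    funext q; simp [Matrix.mul_apply]
  rw [this]
  exact DifferentiableAt.fun_sum fun k _ => (hA i k).fun_mul (hB k j)

variable (hU : IsOpen U)
  (hv : ∀ j i, ContDiffOn ℝ (⊤ : ℕ∞) (fun p => v j p i) U)
  (hh : ∀ j, ContDiffOn ℝ (⊤ : ℕ∞) (h j) U)
  (hON : ∀ p ∈ U, ∀ j k, star (v j p) ⬝ᵥ v k p = if j = k then 1 else 0)

include hU hv hh hON

section atp
variable {p : Phase n} (hp : p ∈ U)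
include hp

lemma mdiff_proj (k : Fin m) : MDiff (Proj1 (v k)) p :=
  mdiff_of_contDiffOn hU hp (proj_smooth hv k)

lemma mdiff_A1 : MDiff (A1 h v) p :=
  mdiff_of_contDiffOn hU hp (A1_smooth hv hh)

lemma mdiff_pdM_proj (k : Fin m) (d : Phase n) : MDiff (fun q => pdM (Proj1 (v k)) d q) p :=
  mdiff_of_contDiffOn hU hp (contDiffOn_pdM hU (proj_smooth hv k) d)

lemma mdiff_pdM_A1 (d : Phase n) : MDiff (fun q => pdM (A1 h v) d q) p :=
  mdiff_of_contDiffOn hU hp (contDiffOn_pdM hU (A1_smooth hv hh) d)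

lemma hdiffC (j : Fin m) : DifferentiableAt ℝ (fun q => (h j q : ℂ)) p :=
  diffAt_of_contDiffOn hU hp (Complex.ofRealCLM.contDiff.comp_contDiffOn (hh j))

lemma hdiffR (j : Fin m) : DifferentiableAt ℝ (h j) p :=
  diffAt_of_contDiffOn hU hp (hh j)

lemma D1 {j l : Fin m} (hlj : l ≠ j) (d : Phase n) :
    pdM (Proj1 (v l)) d p * Proj1 (v j) p + Proj1 (v l) p * pdM (Proj1 (v j)) d p = 0 := by
  rw [← pdM_mul (mdiff_proj hU hv hh hON hp l) (mdiff_proj hU hv hh hON hp j) d]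
  rw [pdM_congr hU hp (fun q hq => proj_mul_ne hON hq hlj) d, pdM_const]

lemma D2 (j : Fin m) (d : Phase n) :
    pdM (A1 h v) d p * Proj1 (v j) p + A1 h v p * pdM (Proj1 (v j)) d p
    = (pdS (h j) d p : ℂ) • Proj1 (v j) p + (h j p : ℂ) • pdM (Proj1 (v j)) d p := by
  rw [← pdM_mul (mdiff_A1 hU hv hh hON hp) (mdiff_proj hU hv hh hON hp j) d]
  rw [pdM_congr hU hp (fun q hq => A1_mul_proj hON hq j) d]
  rw [pdM_smul (hdiffC hU hv hh hON hp j) (mdiff_proj hU hv hh hON hp j) d]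
  rw [pdC_ofReal (hdiffR hU hv hh hON hp j) d]

lemma D2' (j : Fin m) (d : Phase n) :
    pdM (Proj1 (v j)) d p * A1 h v p + Proj1 (v j) p * pdM (A1 h v) d p
    = (pdS (h j) d p : ℂ) • Proj1 (v j) p + (h j p : ℂ) • pdM (Proj1 (v j)) d p := by
  rw [← pdM_mul (mdiff_proj hU hv hh hON hp j) (mdiff_A1 hU hv hh hON hp) d]
  rw [pdM_congr hU hp (fun q hq => proj_mul_A1 hON hq j) d]
  rw [pdM_smul (hdiffC hU hv hh hON hp j) (mdiff_proj hU hv hh hON hp j) d]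
  rw [pdC_ofReal (hdiffR hU hv hh hON hp j) d]

end atp

lemma K1 {q : Phase n} (hq : q ∈ U) {j l : Fin m} (hlj : l ≠ j) (d : Phase n) :
    Proj1 (v l) q * (pdM (A1 h v) d q * Proj1 (v j) q)
    = ((h j q : ℂ) - (h l q : ℂ)) • (Proj1 (v l) q * pdM (Proj1 (v j)) d q) := by
  have e := D2 hU hv hh hON hq j d
  have eX : pdM (A1 h v) d q * Proj1 (v j) q
      = (pdS (h j) d q : ℂ) • Proj1 (v j) q + (h j q : ℂ) • pdM (Proj1 (v j)) d q
        - A1 h v q * pdM (Proj1 (v j)) d q := eq_sub_of_add_eq e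
  rw [eX]
  rw [mul_sub, mul_add, mul_smul_comm, mul_smul_comm, ← mul_assoc,
    proj_mul_ne hON hq hlj, proj_mul_A1 hON hq l, smul_mul_assoc]
  module

omit hU hv hh hON in
lemma pdS_sub {f g : Phase n → ℝ} {p : Phase n} (hf : DifferentiableAt ℝ f p)
    (hg : DifferentiableAt ℝ g p) (d : Phase n) :
    pdS (fun q => f q - g q) d p = pdS f d p - pdS g d p := by
  simp only [pdS]; rw [fderiv_fun_sub hf hg]; rfl

omit hU hv hh hON in
lemma diffC_of_diffR {g : Phase n → ℝ} {p : Phase n} (hg : DifferentiableAt ℝ g p) :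
    DifferentiableAt ℝ (fun q => (g q : ℂ)) p :=
  Complex.ofRealCLM.differentiableAt.comp p hg

section atp2
variable {p : Phase n} (hp : p ∈ U)
include hp

lemma hstar {j l : Fin m} (hlj : l ≠ j) (x y : Phase n) :
    pdM (Proj1 (v l)) x p * (pdM (A1 h v) y p * Proj1 (v j) p)
    + Proj1 (v l) p * (pdM2 (A1 h v) x y p * Proj1 (v j) p
        + pdM (A1 h v) y p * pdM (Proj1 (v j)) x p)
    = ((pdS (h j) x p : ℂ) - (pdS (h l) x p : ℂ)) • (Proj1 (v l) p * pdM (Proj1 (v j)) y p)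
      + ((h j p : ℂ) - (h l p : ℂ)) • (pdM (Proj1 (v l)) x p * pdM (Proj1 (v j)) y p
          + Proj1 (v l) p * pdM2 (Proj1 (v j)) x y p) := by
  have hFG := pdM_congr hU hp (fun q hq => K1 hU hv hh hON hq hlj y) x
  rw [pdM_mul (A := fun q => Proj1 (v l) q)
      (B := fun q => pdM (A1 h v) y q * Proj1 (v j) q)
      (mdiff_proj hU hv hh hON hp l)
      ((mdiff_pdM_A1 hU hv hh hON hp y).mul (mdiff_proj hU hv hh hON hp j)) x] at hFG
  rw [pdM_mul (A := fun q => pdM (A1 h v) y q) (B := fun q => Proj1 (v j) q)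
      (mdiff_pdM_A1 hU hv hh hON hp y) (mdiff_proj hU hv hh hON hp j) x] at hFG
  simp only [← Complex.ofReal_sub] at hFG
  rw [pdM_smul (f := fun q => ((h j q - h l q : ℝ) : ℂ))
      (A := fun q => Proj1 (v l) q * pdM (Proj1 (v j)) y q)
      (diffC_of_diffR ((hdiffR hU hv hh hON hp j).sub (hdiffR hU hv hh hON hp l)))
      ((mdiff_proj hU hv hh hON hp l).mul (mdiff_pdM_proj hU hv hh hON hp j y)) x] at hFG
  rw [pdC_ofReal (g := fun q => h j q - h l q) ((hdiffR hU hv hh hON hp j).sub (hdiffR hU hv hh hON hp l)) x] at hFG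
  rw [pdM_mul (A := fun q => Proj1 (v l) q) (B := fun q => pdM (Proj1 (v j)) y q)
      (mdiff_proj hU hv hh hON hp l) (mdiff_pdM_proj hU hv hh hON hp j y) x] at hFG
  rw [pdS_sub (hdiffR hU hv hh hON hp j) (hdiffR hU hv hh hON hp l) x] at hFG
  simpa [Complex.ofReal_sub, pdM2] using hFG

lemma Tlemma {j l : Fin m} (hlj : l ≠ j) (x y : Phase n) :
    Proj1 (v l) p * (pdM2 (A1 h v) x y p * Proj1 (v j) p)
    - (pdS (h j) y p : ℂ) • (Proj1 (v l) p * pdM (Proj1 (v j)) x p)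
    + Proj1 (v l) p * (pdM (A1 h v) x p * pdM (Proj1 (v j)) y p)
    - (pdS (h j) x p : ℂ) • (Proj1 (v l) p * pdM (Proj1 (v j)) y p)
    + Proj1 (v l) p * (pdM (A1 h v) y p * pdM (Proj1 (v j)) x p)
    = ((h j p : ℂ) - (h l p : ℂ)) • (Proj1 (v l) p * pdM2 (Proj1 (v j)) x y p) := by
  have hs := hstar hU hv hh hON hp hlj x y
  have e2 := eq_sub_of_add_eq (D2 hU hv hh hON hp j y)
  have E2 := congrArg (fun M => pdM (Proj1 (v l)) x p * M) e2
  have e3 : Proj1 (v l) p * pdM (A1 h v) x p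
      = (pdS (h l) x p : ℂ) • Proj1 (v l) p + (h l p : ℂ) • pdM (Proj1 (v l)) x p
        - pdM (Proj1 (v l)) x p * A1 h v p := by
    linear_combination (norm := module) D2' hU hv hh hON hp l x
  have E3 := congrArg (fun M => M * pdM (Proj1 (v j)) y p) e3
  have E4 := D1 hU hv hh hON hp hlj x
  simp only [mul_add, mul_sub, add_mul, sub_mul, smul_mul_assoc, mul_smul_comm,
    mul_assoc] at hs E2 E3 ⊢
  linear_combination (norm := module) hs - E2 + E3 - (pdS (h j) y p : ℂ) • E4

end atp2

section atp3
variable {p : Phase n} (hp : p ∈ U)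
include hp

lemma pdM_A1_shift (j : Fin m) (d : Phase n) :
    pdM (fun q => A1 h v q + (h j q : ℂ) • 1) d p
    = pdM (A1 h v) d p + (pdS (h j) d p : ℂ) • 1 := by
  have m1 : MDiff (fun _ => (1 : Matrix (Fin m) (Fin m) ℂ)) p :=
    fun a b => differentiableAt_const _
  have m2 : MDiff (fun q => (h j q : ℂ) • (1 : Matrix (Fin m) (Fin m) ℂ)) p := by
    intro a b
    have : (fun q => ((h j q : ℂ) • (1 : Matrix (Fin m) (Fin m) ℂ)) a b)
        = fun q => (h j q : ℂ) * (1 : Matrix (Fin m) (Fin m) ℂ) a b := rfl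
    rw [this]
    exact (hdiffC hU hv hh hON hp j).mul_const _
  rw [pdM_add (mdiff_A1 hU hv hh hON hp) m2 d,
    pdM_smul (hdiffC hU hv hh hON hp j) m1 d, pdM_const,
    pdC_ofReal (hdiffR hU hv hh hON hp j) d, smul_zero, add_zero]

lemma sum_proj_ne (j : Fin m) :
    ∑ l ∈ Finset.univ.filter (fun l => l ≠ j), Proj1 (v l) p = 1 - Proj1 (v j) p := by
  rw [Finset.filter_ne', Finset.sum_erase_eq_sub (Finset.mem_univ j), proj_sum hON hp]

lemma pdM2_sum_proj (j : Fin m) (x y : Phase n) :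
    ∑ l ∈ Finset.univ.filter (fun l => l ≠ j), pdM2 (Proj1 (v l)) x y p
    = - pdM2 (Proj1 (v j)) x y p := by
  have hall : ∑ l : Fin m, pdM2 (Proj1 (v l)) x y p = 0 := by
    have h1 : ∑ l : Fin m, pdM2 (Proj1 (v l)) x y p
        = pdM (fun q => ∑ l : Fin m, pdM (Proj1 (v l)) y q) x p := by
      rw [show (∑ l : Fin m, pdM2 (Proj1 (v l)) x y p)
          = ∑ l : Fin m, pdM (fun q => pdM (Proj1 (v l)) y q) x p from rfl,
        ← pdM_sum Finset.univ (fun l _ => mdiff_pdM_proj hU hv hh hON hp l y) x]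
    have h2 : ∀ q ∈ U, (∑ l : Fin m, pdM (Proj1 (v l)) y q)
        = (0 : Matrix (Fin m) (Fin m) ℂ) := by
      intro q hq
      rw [← pdM_sum Finset.univ (fun l _ => mdiff_proj hU hv hh hON hq l) y,
        pdM_congr hU hq (fun r hr => proj_sum hON hr) y, pdM_const]
    rw [h1, pdM_congr hU hp h2 x, pdM_const]
  rw [Finset.filter_ne', Finset.sum_erase_eq_sub (Finset.mem_univ j), hall, zero_sub]

lemma final_sum (j : Fin m) (x y : Phase n) :
    ∑ l ∈ Finset.univ.filter (fun l => l ≠ j),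
      (Proj1 (v l) p * pdM2 (Proj1 (v j)) x y p
        - Proj1 (v j) p * pdM2 (Proj1 (v l)) x y p)
    = pdM2 (Proj1 (v j)) x y p := by
  rw [Finset.sum_sub_distrib, ← Finset.sum_mul, ← Finset.mul_sum,
    sum_proj_ne hU hv hh hON hp j, pdM2_sum_proj hU hv hh hON hp j x y]
  noncomm_ring

end atp3

end deriv

end Aux

open Aux in
theorem statement_6 {n m : ℕ} (U : Set (Phase n)) (hU : IsOpen U)
    (v : Fin m → Phase n → Fin m → ℂ) (h : Fin m → Phase n → ℝ)
    (A₀ : Phase n → Matrix (Fin m) (Fin m) ℂ)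
    (hvsmooth : ∀ j i, ContDiffOn ℝ (⊤ : ℕ∞) (fun p => v j p i) U)
    (hhsmooth : ∀ j, ContDiffOn ℝ (⊤ : ℕ∞) (h j) U)
    (hA₀smooth : ∀ i j, ContDiffOn ℝ (⊤ : ℕ∞) (fun p => A₀ p i j) U)
    (hON : ∀ p ∈ U, ∀ j k, star (v j p) ⬝ᵥ v k p = if j = k then 1 else 0)
    (hdist : ∀ p ∈ U, ∀ j k, j ≠ k → h j p ≠ h k p) :
    ∀ p ∈ U, ∀ j : Fin m,
      ufun A₀ h v j p - (Complex.I / 2) • ∑ α : Fin n, pdM2 (Proj1 (v j)) (dX n α) (dXi n α) p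
      = (1 / 2 : ℂ) • ∑ l ∈ Finset.univ.filter (fun l => l ≠ j),
          ((h j p : ℂ) - (h l p : ℂ))⁻¹ •
            (Proj1 (v l) p * ((2 : ℂ) • (Asub A₀ h v p * Proj1 (v j) p)
                + Complex.I • mbrack (fun q => A1 h v q + (h j q : ℂ) • 1) (Proj1 (v j)) p)
             + Proj1 (v j) p * ((2 : ℂ) • (Asub A₀ h v p * Proj1 (v l) p)
                + Complex.I • mbrack (fun q => A1 h v q + (h l q : ℂ) • 1) (Proj1 (v l)) p)) := by
  classical
  intro p hp j
  have key : ∀ l ∈ Finset.univ.filter (fun l => l ≠ j),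
      ((h j p : ℂ) - (h l p : ℂ))⁻¹ •
        (Proj1 (v l) p * Bfun A₀ h v j p + Proj1 (v j) p * Bfun A₀ h v l p)
      = (1 / 2 : ℂ) • (((h j p : ℂ) - (h l p : ℂ))⁻¹ •
            (Proj1 (v l) p * ((2 : ℂ) • (Asub A₀ h v p * Proj1 (v j) p)
                + Complex.I • mbrack (fun q => A1 h v q + (h j q : ℂ) • 1) (Proj1 (v j)) p)
             + Proj1 (v j) p * ((2 : ℂ) • (Asub A₀ h v p * Proj1 (v l) p)
                + Complex.I • mbrack (fun q => A1 h v q + (h l q : ℂ) • 1) (Proj1 (v l)) p)))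
        + (Complex.I / 2) • (∑ α : Fin n,
            Proj1 (v l) p * pdM2 (Proj1 (v j)) (dX n α) (dXi n α) p)
        - (Complex.I / 2) • (∑ α : Fin n,
            Proj1 (v j) p * pdM2 (Proj1 (v l)) (dX n α) (dXi n α) p) := by
    intro l hlF
    have hlj : l ≠ j := (Finset.mem_filter.mp hlF).2
    have hne : (h j p : ℂ) - (h l p : ℂ) ≠ 0 := by
      rw [sub_ne_zero]
      exact_mod_cast hdist p hp j l (Ne.symm hlj)
    have hQl0 : Proj1 (v l) p * Proj1 (v j) p = 0 := proj_mul_ne hON hp hlj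
    have hQj0 : Proj1 (v j) p * Proj1 (v l) p = 0 := proj_mul_ne hON hp (Ne.symm hlj)
    have hshift : ∀ (k : Fin m) (d : Phase n),
        pdM (fun q => A1 h v q + (h k q : ℂ) • 1) d p
        = pdM (A1 h v) d p + (pdS (h k) d p : ℂ) • 1 :=
      fun k d => pdM_A1_shift hU hvsmooth hhsmooth hON hp k d
    have hTj := Finset.sum_congr rfl (fun (α : Fin n) (_ : α ∈ Finset.univ) =>
      Tlemma hU hvsmooth hhsmooth hON hp hlj (dX n α) (dXi n α))
    have hTl := Finset.sum_congr rfl (fun (α : Fin n) (_ : α ∈ Finset.univ) =>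
      Tlemma hU hvsmooth hhsmooth hON hp (Ne.symm hlj) (dX n α) (dXi n α))
    simp only [Finset.sum_add_distrib, Finset.sum_sub_distrib, ← Finset.smul_sum] at hTj hTl
    have main : Proj1 (v l) p * Bfun A₀ h v j p + Proj1 (v j) p * Bfun A₀ h v l p
        = (1 / 2 : ℂ) •
            (Proj1 (v l) p * ((2 : ℂ) • (Asub A₀ h v p * Proj1 (v j) p)
                + Complex.I • mbrack (fun q => A1 h v q + (h j q : ℂ) • 1) (Proj1 (v j)) p)
             + Proj1 (v j) p * ((2 : ℂ) • (Asub A₀ h v p * Proj1 (v l) p)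
                + Complex.I • mbrack (fun q => A1 h v q + (h l q : ℂ) • 1) (Proj1 (v l)) p))
          + (Complex.I / 2 * ((h j p : ℂ) - (h l p : ℂ))) • (∑ α : Fin n,
              Proj1 (v l) p * pdM2 (Proj1 (v j)) (dX n α) (dXi n α) p)
          + (Complex.I / 2 * ((h l p : ℂ) - (h j p : ℂ))) • (∑ α : Fin n,
              Proj1 (v j) p * pdM2 (Proj1 (v l)) (dX n α) (dXi n α) p) := by
      simp only [Bfun, Asub, mbrack, hshift]
      simp only [mul_add, add_mul, mul_sub, sub_mul, smul_add, smul_sub, smul_mul_assoc,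
        mul_smul_comm, mul_assoc, one_mul, Finset.mul_sum, Finset.sum_mul,
        Finset.sum_add_distrib, Finset.sum_sub_distrib, hQl0, hQj0, smul_zero, mul_zero,
        zero_mul, add_zero, zero_add, sub_zero]
      linear_combination (norm := module) (Complex.I / 2) • hTj + (Complex.I / 2) • hTl
    have hc1 : ((h j p : ℂ) - (h l p : ℂ))⁻¹ * (Complex.I / 2 * ((h j p : ℂ) - (h l p : ℂ)))
        = Complex.I / 2 := by field_simp
    have hc2 : ((h j p : ℂ) - (h l p : ℂ))⁻¹ * (Complex.I / 2 * ((h l p : ℂ) - (h j p : ℂ)))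
        = -(Complex.I / 2) := by field_simp; ring
    rw [main]
    match_scalars
    all_goals field_simp
    all_goals ring
  rw [ufun, Finset.sum_congr rfl key]
  simp only [Finset.sum_add_distrib, Finset.sum_sub_distrib, ← Finset.smul_sum]
  have hswap : (∑ l ∈ Finset.univ.filter (fun l => l ≠ j), ∑ α : Fin n,
        Proj1 (v l) p * pdM2 (Proj1 (v j)) (dX n α) (dXi n α) p)
      - (∑ l ∈ Finset.univ.filter (fun l => l ≠ j), ∑ α : Fin n,
        Proj1 (v j) p * pdM2 (Proj1 (v l)) (dX n α) (dXi n α) p)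
      = ∑ α : Fin n, pdM2 (Proj1 (v j)) (dX n α) (dXi n α) p := by
    rw [← Finset.sum_sub_distrib]
    simp only [← Finset.sum_sub_distrib]
    rw [Finset.sum_comm]
    exact Finset.sum_congr rfl (fun α _ =>
      final_sum hU hvsmooth hhsmooth hON hp j (dX n α) (dXi n α))
  linear_combination (norm := module) (Complex.I / 2) • hswap
end
end

section
/- Let U ⊆ ℝⁿ_x × ℝⁿ_ξ be open, let v^{(1)},…,v^{(m)} : U → ℂᵐ be C^∞ functions whose values at each point of U form an orthonormal basis of ℂᵐ, let P^{(j)} := v^{(j)} [v^{(j)}]*, let h^{(1)},…,h^{(m)} : U → ℝ be C^∞ functions that are pairwise distinct at every point of U, and set A₁ := Σ_k h^{(k)} P^{(k)}. Let A₀ : U → ℂ^{m×m} be any C^∞ matrix-function and put A_sub := A₀ + (i/2) Σ_α ∂²A₁/∂x^α∂ξ_α. For each j define the scalar function q^{(j)} := [v^{(j)}]* A_sub v^{(j)} − (i/2){[v^{(j)}]*, A₁ − h^{(j)}, v^{(j)}} − i [v^{(j)}]* {v^{(j)}, h^{(j)}}, the matrix-function B^{(j)} := (A₀ − q^{(j)}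 − (i/2) Σ_α ∂²h^{(j)}/∂x^α∂ξ_α + i Σ_α ∂²A₁/∂x^α∂ξ_α) P^{(j)} − i Σ_α (∂h^{(j)}/∂ξ_α) ∂P^{(j)}/∂x^α + i Σ_α (∂A₁/∂x^α) ∂P^{(j)}/∂ξ_α, and the matrix-function u^{(j)} := Σ_{l ≠ j} (P^{(l)} B^{(j)} + P^{(j)} B^{(l)}) / (h^{(j)} − h^{(l)}). Then at every point of U, tr( u^{(j)} − (i/2) Σ_α ∂²P^{(j)}/∂x^α∂ξ_α ) = −i {[v^{(j)}]*, v^{(j)}}. -/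
open Matrix MeasureTheory

noncomputable section

namespace Proof7

variable {n m : ℕ}

lemma fderiv_star_c (f : Phase n → ℂ) (p d : Phase n) :
    fderiv ℝ (fun q => star (f q)) p d = star (fderiv ℝ f p d) := by
  have h1 : (fun q => star (f q)) = (⇑Complex.conjCLE ∘ f) := by
    funext q; simp [Complex.conjCLE_apply]
  rw [h1, Complex.conjCLE.comp_fderiv]
  simp [Complex.conjCLE_apply]

lemma fderiv_ofReal_c (f : Phase n → ℝ) (p d : Phase n) (hf : DifferentiableAt ℝ f p) :
    fderiv ℝ (fun q => ((f q : ℝ) : ℂ)) p d = ((fderiv ℝ f p d : ℝ) : ℂ) := by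
  have h1 : (fun q => ((f q : ℝ) : ℂ)) = (⇑Complex.ofRealCLM ∘ f) := rfl
  rw [h1, (Complex.ofRealCLM.hasFDerivAt.comp p hf.hasFDerivAt).fderiv]
  rfl

lemma vecMulVec_mulVec (a b x : Fin m → ℂ) :
    (vecMulVec a b).mulVec x = (b ⬝ᵥ x) • a := by
  funext i
  simp only [Matrix.mulVec, dotProduct, Matrix.vecMulVec_apply, Pi.smul_apply, smul_eq_mul,
    Finset.sum_mul, Finset.mul_sum]
  exact Finset.sum_congr rfl fun k _ => by ring

lemma trace_vecMulVec_mul (a b : Fin m → ℂ) (M : Matrix (Fin m) (Fin m) ℂ) :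
    (vecMulVec a b * M).trace = b ⬝ᵥ M.mulVec a := by
  simp only [Matrix.trace, Matrix.diag, Matrix.mul_apply, Matrix.vecMulVec_apply,
    dotProduct, Matrix.mulVec]
  rw [Finset.sum_comm]
  exact Finset.sum_congr rfl fun k _ => by
    rw [Finset.mul_sum]; exact Finset.sum_congr rfl fun i _ => by ring

lemma sum_mulVec {ι : Type*} (s : Finset ι) (A : ι → Matrix (Fin m) (Fin m) ℂ) (x : Fin m → ℂ) :
    (∑ i ∈ s, A i).mulVec x = ∑ i ∈ s, (A i).mulVec x := by
  funext k
  simp only [Matrix.mulVec, dotProduct, Matrix.sum_apply, Finset.sum_apply, Finset.sum_mul]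
  rw [Finset.sum_comm]

lemma diff_ofReal {n : ℕ} (f : Phase n → ℝ) {q : Phase n} (hf : DifferentiableAt ℝ f q) :
    DifferentiableAt ℝ (fun r => ((f r : ℝ) : ℂ)) q :=
  Complex.ofRealCLM.differentiable.differentiableAt.comp q hf

section Main

variable {n m : ℕ} {U : Set (Phase n)} {v : Fin m → Phase n → Fin m → ℂ}
  {h : Fin m → Phase n → ℝ}

-- differentiability of vector entries
lemma diff_v (hU : IsOpen U) (hv : ∀ j i, ContDiffOn ℝ (⊤ : ℕ∞) (fun p => v j p i) U)
    (j i : Fin m) {q : Phase n} (hq : q ∈ U) :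
    DifferentiableAt ℝ (fun r => v j r i) q :=
  ((hv j i).differentiableOn (by simp)).differentiableAt (hU.mem_nhds hq)

lemma diff_star_v (hU : IsOpen U) (hv : ∀ j i, ContDiffOn ℝ (⊤ : ℕ∞) (fun p => v j p i) U)
    (j i : Fin m) {q : Phase n} (hq : q ∈ U) :
    DifferentiableAt ℝ (fun r => star (v j r i)) q := by
  have h1 : (fun r => star (v j r i)) = (⇑Complex.conjCLE ∘ fun r => v j r i) := by
    funext r; simp [Complex.conjCLE_apply]
  rw [h1]
  exact Complex.conjCLE.differentiable.differentiableAt.comp q (diff_v hU hv j i hq)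

lemma diff_h (hU : IsOpen U) (hh : ∀ j, ContDiffOn ℝ (⊤ : ℕ∞) (h j) U)
    (j : Fin m) {q : Phase n} (hq : q ∈ U) :
    DifferentiableAt ℝ (h j) q :=
  ((hh j).differentiableOn (by simp)).differentiableAt (hU.mem_nhds hq)

-- pdVstar is the conjugate of pdV
lemma pdVstar_eq (j : Fin m) (d p : Phase n) (i : Fin m) :
    pdVstar (v j) d p i = star (pdV (v j) d p i) := by
  simp only [pdVstar, pdV]
  exact fderiv_star_c _ p d

-- orthonormality relation F2
lemma F2 (hU : IsOpen U) (hv : ∀ j i, ContDiffOn ℝ (⊤ : ℕ∞) (fun p => v j p i) U)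
    (hON : ∀ p ∈ U, ∀ j k, star (v j p) ⬝ᵥ v k p = if j = k then 1 else 0)
    {p : Phase n} (hp : p ∈ U) (j k : Fin m) (d : Phase n) :
    pdVstar (v j) d p ⬝ᵥ v k p + star (v j p) ⬝ᵥ pdV (v k) d p = 0 := by
  have hzero : fderiv ℝ (fun q => ∑ i, star (v j q i) * v k q i) p = 0 := by
    have hev : (fun q => ∑ i, star (v j q i) * v k q i)
        =ᶠ[nhds p] fun _ => (if j = k then 1 else 0 : ℂ) := by
      filter_upwards [hU.mem_nhds hp] with q hq
      simpa [dotProduct] using hON q hq j k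
    rw [hev.fderiv_eq, fderiv_fun_const]
    rfl
  have hsum : fderiv ℝ (fun q => ∑ i, star (v j q i) * v k q i) p
      = ∑ i, fderiv ℝ (fun q => star (v j q i) * v k q i) p :=
    fderiv_fun_sum fun i _ => ((diff_star_v hU hv j i hp).mul (diff_v hU hv k i hp))
  have happ := congrArg (fun L => L d) (hsum.symm.trans hzero)
  simp only [ContinuousLinearMap.zero_apply, ContinuousLinearMap.sum_apply] at happ
  have hterm : ∀ i : Fin m, fderiv ℝ (fun q => star (v j q i) * v k q i) p d
      = star (fderiv ℝ (fun q => v j q i) p d) * v k p i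
        + star (v j p i) * fderiv ℝ (fun q => v k q i) p d := by
    intro i
    rw [fderiv_fun_mul (diff_star_v hU hv j i hp) (diff_v hU hv k i hp)]
    simp only [ContinuousLinearMap.add_apply, ContinuousLinearMap.smul_apply, smul_eq_mul]
    rw [fderiv_star_c]
    ring
  rw [Finset.sum_congr rfl (fun i _ => hterm i)] at happ
  simp only [dotProduct, pdVstar, pdV, Pi.star_apply, fderiv_star_c]
  rw [← happ, Finset.sum_add_distrib]

-- completeness F3
lemma F3 (hON : ∀ p ∈ U, ∀ j k, star (v j p) ⬝ᵥ v k p = if j = k then 1 else 0)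
    {p : Phase n} (hp : p ∈ U) :
    ∑ l, Proj1 (v l) p = (1 : Matrix (Fin m) (Fin m) ℂ) := by
  classical
  set W : Matrix (Fin m) (Fin m) ℂ := Matrix.of fun i l => v l p i with hW
  have h1 : Wᴴ * W = 1 := by
    ext j k
    have := hON p hp j k
    simpa [Matrix.mul_apply, Matrix.conjTranspose_apply, dotProduct, Matrix.one_apply, hW]
      using this
  have h2 : W * Wᴴ = 1 := mul_eq_one_comm.mp h1
  calc ∑ l, Proj1 (v l) p = W * Wᴴ := by
        ext i i'
        simp [Proj1, Matrix.vecMulVec_apply, Matrix.mul_apply, Matrix.conjTranspose_apply,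
          Matrix.sum_apply, hW]
      _ = 1 := h2

-- derivative of the projection
lemma dProj (hU : IsOpen U) (hv : ∀ j i, ContDiffOn ℝ (⊤ : ℕ∞) (fun p => v j p i) U)
    (k : Fin m) (d : Phase n) {p : Phase n} (hp : p ∈ U) :
    pdM (Proj1 (v k)) d p
      = vecMulVec (pdV (v k) d p) (star (v k p)) + vecMulVec (v k p) (pdVstar (v k) d p) := by
  ext i i'
  simp only [pdM, Matrix.of_apply, Proj1, Matrix.vecMulVec_apply, Matrix.add_apply,
    Pi.star_apply]
  rw [fderiv_fun_mul (diff_v hU hv k i hp) (diff_star_v hU hv k i' hp)]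
  simp only [ContinuousLinearMap.add_apply, ContinuousLinearMap.smul_apply, smul_eq_mul,
    pdV, pdVstar]
  ring

-- derivative of A1
lemma dA1 (hU : IsOpen U) (hv : ∀ j i, ContDiffOn ℝ (⊤ : ℕ∞) (fun p => v j p i) U)
    (hh : ∀ j, ContDiffOn ℝ (⊤ : ℕ∞) (h j) U) (d : Phase n) {p : Phase n} (hp : p ∈ U) :
    pdM (A1 h v) d p
      = ∑ k, (((pdS (h k) d p : ℝ) : ℂ) • Proj1 (v k) p
          + ((h k p : ℝ) : ℂ) • (vecMulVec (pdV (v k) d p) (star (v k p))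
              + vecMulVec (v k p) (pdVstar (v k) d p))) := by
  ext i i'
  simp only [pdM, Matrix.of_apply]
  rw [show (fun q => A1 h v q i i')
      = fun q => ∑ k, ((h k q : ℝ) : ℂ) * (v k q i * star (v k q i'))
      from funext fun q => by
        simp [A1, Matrix.sum_apply, Proj1, Matrix.vecMulVec_apply, Matrix.smul_apply]]
  have hdiffprod : ∀ (k : Fin m) (q : Phase n), q ∈ U →
      DifferentiableAt ℝ (fun r => v k r i * star (v k r i')) q := fun k q hq =>
    (diff_v hU hv k i hq).mul (diff_star_v hU hv k i' hq)
  rw [fderiv_fun_sum (A := fun k r => ((h k r : ℝ) : ℂ) * (v k r i * star (v k r i'))) fun k _ => ((diff_ofReal _ (diff_h hU hh k hp)).mul (hdiffprod k p hp))]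
  simp only [ContinuousLinearMap.sum_apply, Finset.sum_apply, Matrix.sum_apply]
  refine Finset.sum_congr rfl fun k _ => ?_
  rw [fderiv_fun_mul (diff_ofReal _ (diff_h hU hh k hp)) (hdiffprod k p hp),
    fderiv_fun_mul (diff_v hU hv k i hp) (diff_star_v hU hv k i' hp)]
  simp only [ContinuousLinearMap.add_apply, ContinuousLinearMap.smul_apply, smul_eq_mul,
    Matrix.add_apply, Matrix.smul_apply, Proj1, Matrix.vecMulVec_apply, Pi.star_apply,
    pdV, pdVstar, pdS, smul_eq_mul]
  rw [fderiv_ofReal_c _ _ _ (diff_h hU hh k hp), fderiv_star_c]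
  ring
lemma dot_sum {ι : Type*} (s : Finset ι) (a : Fin m → ℂ) (w : ι → Fin m → ℂ) :
    a ⬝ᵥ (∑ i ∈ s, w i) = ∑ i ∈ s, a ⬝ᵥ w i := by
  simp only [dotProduct, Finset.sum_apply, Finset.mul_sum]
  rw [Finset.sum_comm]

lemma proj_mulVec (k : Fin m) (p : Phase n) (x : Fin m → ℂ) :
    (Proj1 (v k) p).mulVec x = (star (v k p) ⬝ᵥ x) • v k p := by
  rw [Proj1, vecMulVec_mulVec]

lemma dProj_mulVec (hU : IsOpen U) (hv : ∀ j i, ContDiffOn ℝ (⊤ : ℕ∞) (fun p => v j p i) U)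
    (hON : ∀ p ∈ U, ∀ j k, star (v j p) ⬝ᵥ v k p = if j = k then 1 else 0)
    {k l : Fin m} (hkl : k ≠ l) (d : Phase n) {p : Phase n} (hp : p ∈ U) :
    (pdM (Proj1 (v k)) d p).mulVec (v l p) = (pdVstar (v k) d p ⬝ᵥ v l p) • v k p := by
  rw [dProj hU hv k d hp, Matrix.add_mulVec, vecMulVec_mulVec, vecMulVec_mulVec,
    hON p hp k l, if_neg hkl]
  simp

lemma key_dA1 (hU : IsOpen U) (hv : ∀ j i, ContDiffOn ℝ (⊤ : ℕ∞) (fun p => v j p i) U)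
    (hh : ∀ j, ContDiffOn ℝ (⊤ : ℕ∞) (h j) U)
    (hON : ∀ p ∈ U, ∀ j k, star (v j p) ⬝ᵥ v k p = if j = k then 1 else 0)
    {p : Phase n} (hp : p ∈ U) {l j : Fin m} (hlj : l ≠ j) (d : Phase n) :
    star (v l p) ⬝ᵥ (pdM (A1 h v) d p).mulVec (v j p)
      = (((h j p : ℝ) : ℂ) - ((h l p : ℝ) : ℂ)) * (star (v l p) ⬝ᵥ pdV (v j) d p) := by
  classical
  rw [dA1 hU hv hh d hp, sum_mulVec, dot_sum]
  have hsummand : ∀ k : Fin m,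
      star (v l p) ⬝ᵥ ((((pdS (h k) d p : ℝ) : ℂ) • Proj1 (v k) p
          + ((h k p : ℝ) : ℂ) • (vecMulVec (pdV (v k) d p) (star (v k p))
              + vecMulVec (v k p) (pdVstar (v k) d p))).mulVec (v j p))
      = (if k = j then ((h j p : ℝ) : ℂ) * (star (v l p) ⬝ᵥ pdV (v j) d p) else 0)
        + (if k = l then ((h l p : ℝ) : ℂ) * (pdVstar (v l) d p ⬝ᵥ v j p) else 0) := by
    intro k
    rw [Matrix.add_mulVec, Matrix.smul_mulVec, Matrix.smul_mulVec, proj_mulVec,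
      Matrix.add_mulVec, vecMulVec_mulVec, vecMulVec_mulVec]
    simp only [dotProduct_add, dotProduct_smul, smul_eq_mul, hON p hp k j, hON p hp l k]
    by_cases hkj : k = j
    · subst hkj
      simp [hlj, Ne.symm hlj]
    · by_cases hkl : k = l
      · subst hkl
        simp [hlj, hkj]
      · simp [hkj, hkl, Ne.symm hkl]
  rw [Finset.sum_congr rfl fun k _ => hsummand k, Finset.sum_add_distrib]
  simp only [Finset.sum_ite_eq', Finset.mem_univ, if_true]
  have hF2 := F2 hU hv hON hp l j d
  linear_combination ((h l p : ℝ) : ℂ) * hF2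
lemma claimA {A₀ : Phase n → Matrix (Fin m) (Fin m) ℂ}
    (hU : IsOpen U) (hv : ∀ j i, ContDiffOn ℝ (⊤ : ℕ∞) (fun p => v j p i) U)
    (hh : ∀ j, ContDiffOn ℝ (⊤ : ℕ∞) (h j) U)
    (hON : ∀ p ∈ U, ∀ j k, star (v j p) ⬝ᵥ v k p = if j = k then 1 else 0)
    {p : Phase n} (hp : p ∈ U) {j l : Fin m} (hlj : l ≠ j) :
    star (v l p) ⬝ᵥ (Bfun A₀ h v j p).mulVec (v l p)
      = Complex.I * ∑ α : Fin n, ((((h j p : ℝ) : ℂ) - ((h l p : ℝ) : ℂ))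
          * ((star (v l p) ⬝ᵥ pdV (v j) (dX n α) p)
              * (pdVstar (v j) (dXi n α) p ⬝ᵥ v l p))) := by
  rw [Bfun, Matrix.add_mulVec, Matrix.sub_mulVec, dotProduct_add, dotProduct_sub]
  have h1 : star (v l p) ⬝ᵥ ((A₀ p - qfun A₀ h v j p • 1
      - ((Complex.I / 2) * ((∑ α : Fin n, pdS2 (h j) (dX n α) (dXi n α) p : ℝ) : ℂ)) • 1
      + Complex.I • ∑ α : Fin n, pdM2 (A1 h v) (dX n α) (dXi n α) p) * Proj1 (v j) p).mulVec
        (v l p) = 0 := by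
    rw [← Matrix.mulVec_mulVec, proj_mulVec, hON p hp j l, if_neg (Ne.symm hlj)]
    simp
  have h2 : star (v l p) ⬝ᵥ (Complex.I • ∑ α : Fin n,
      ((pdS (h j) (dXi n α) p : ℝ) : ℂ) • pdM (Proj1 (v j)) (dX n α) p).mulVec (v l p) = 0 := by
    rw [Matrix.smul_mulVec, sum_mulVec, dotProduct_smul, dot_sum]
    have hterm : ∀ α : Fin n, star (v l p) ⬝ᵥ (((pdS (h j) (dXi n α) p : ℝ) : ℂ)
        • pdM (Proj1 (v j)) (dX n α) p).mulVec (v l p) = 0 := by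
      intro α
      rw [Matrix.smul_mulVec, dProj_mulVec hU hv hON (Ne.symm hlj) _ hp]
      simp [dotProduct_smul, hON p hp l j, if_neg hlj]
    rw [Finset.sum_congr rfl fun α _ => hterm α]
    simp
  have h3 : star (v l p) ⬝ᵥ (Complex.I • ∑ α : Fin n,
      pdM (A1 h v) (dX n α) p * pdM (Proj1 (v j)) (dXi n α) p).mulVec (v l p)
      = Complex.I * ∑ α : Fin n, ((((h j p : ℝ) : ℂ) - ((h l p : ℝ) : ℂ))
          * ((star (v l p) ⬝ᵥ pdV (v j) (dX n α) p)
              * (pdVstar (v j) (dXi n α) p ⬝ᵥ v l p))) := by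
    rw [Matrix.smul_mulVec, sum_mulVec, dotProduct_smul, dot_sum, smul_eq_mul]
    congr 1
    refine Finset.sum_congr rfl fun α _ => ?_
    rw [← Matrix.mulVec_mulVec, dProj_mulVec hU hv hON (Ne.symm hlj) _ hp,
      Matrix.mulVec_smul, dotProduct_smul, smul_eq_mul,
      key_dA1 hU hv hh hON hp hlj (dX n α)]
    ring
  rw [h1, h2, h3]
  ring

lemma claimB {A₀ : Phase n → Matrix (Fin m) (Fin m) ℂ}
    (hU : IsOpen U) (hv : ∀ j i, ContDiffOn ℝ (⊤ : ℕ∞) (fun p => v j p i) U)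
    (hh : ∀ j, ContDiffOn ℝ (⊤ : ℕ∞) (h j) U)
    (hON : ∀ p ∈ U, ∀ j k, star (v j p) ⬝ᵥ v k p = if j = k then 1 else 0)
    {p : Phase n} (hp : p ∈ U) {j l : Fin m} (hlj : l ≠ j) :
    star (v j p) ⬝ᵥ (Bfun A₀ h v l p).mulVec (v j p)
      = Complex.I * ∑ α : Fin n, ((((h l p : ℝ) : ℂ) - ((h j p : ℝ) : ℂ))
          * ((pdVstar (v j) (dX n α) p ⬝ᵥ v l p)
              * (star (v l p) ⬝ᵥ pdV (v j) (dXi n α) p))) := by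
  rw [Bfun, Matrix.add_mulVec, Matrix.sub_mulVec, dotProduct_add, dotProduct_sub]
  have h1 : star (v j p) ⬝ᵥ ((A₀ p - qfun A₀ h v l p • 1
      - ((Complex.I / 2) * ((∑ α : Fin n, pdS2 (h l) (dX n α) (dXi n α) p : ℝ) : ℂ)) • 1
      + Complex.I • ∑ α : Fin n, pdM2 (A1 h v) (dX n α) (dXi n α) p) * Proj1 (v l) p).mulVec
        (v j p) = 0 := by
    rw [← Matrix.mulVec_mulVec, proj_mulVec, hON p hp l j, if_neg hlj]
    simp
  have h2 : star (v j p) ⬝ᵥ (Complex.I • ∑ α : Fin n,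
      ((pdS (h l) (dXi n α) p : ℝ) : ℂ) • pdM (Proj1 (v l)) (dX n α) p).mulVec (v j p) = 0 := by
    rw [Matrix.smul_mulVec, sum_mulVec, dotProduct_smul, dot_sum]
    have hterm : ∀ α : Fin n, star (v j p) ⬝ᵥ (((pdS (h l) (dXi n α) p : ℝ) : ℂ)
        • pdM (Proj1 (v l)) (dX n α) p).mulVec (v j p) = 0 := by
      intro α
      rw [Matrix.smul_mulVec, dProj_mulVec hU hv hON hlj _ hp]
      simp [dotProduct_smul, hON p hp j l, if_neg (Ne.symm hlj)]
    rw [Finset.sum_congr rfl fun α _ => hterm α]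
    simp
  have h3 : star (v j p) ⬝ᵥ (Complex.I • ∑ α : Fin n,
      pdM (A1 h v) (dX n α) p * pdM (Proj1 (v l)) (dXi n α) p).mulVec (v j p)
      = Complex.I * ∑ α : Fin n, ((((h l p : ℝ) : ℂ) - ((h j p : ℝ) : ℂ))
          * ((pdVstar (v j) (dX n α) p ⬝ᵥ v l p)
              * (star (v l p) ⬝ᵥ pdV (v j) (dXi n α) p))) := by
    rw [Matrix.smul_mulVec, sum_mulVec, dotProduct_smul, dot_sum, smul_eq_mul]
    congr 1
    refine Finset.sum_congr rfl fun α _ => ?_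
    rw [← Matrix.mulVec_mulVec, dProj_mulVec hU hv hON hlj _ hp,
      Matrix.mulVec_smul, dotProduct_smul, smul_eq_mul,
      key_dA1 hU hv hh hON hp (Ne.symm hlj) (dX n α)]
    -- now: (pdVstar (v l) (dXi α) p ⬝ᵥ v j p) * ((h l - h j) * (star (v j p) ⬝ᵥ pdV (v l) (dX α) p))
    -- use F2 to convert both factors
    have hF2a := F2 hU hv hON hp l j (dXi n α)
    have hF2b := F2 hU hv hON hp j l (dX n α)
    have ea : pdVstar (v l) (dXi n α) p ⬝ᵥ v j p = -(star (v l p) ⬝ᵥ pdV (v j) (dXi n α) p) := by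
      linear_combination hF2a
    have eb : star (v j p) ⬝ᵥ pdV (v l) (dX n α) p = -(pdVstar (v j) (dX n α) p ⬝ᵥ v l p) := by
      linear_combination hF2b
    rw [ea, eb]
    ring
  rw [h1, h2, h3]
  ring
lemma smooth_star_v (hv : ∀ j i, ContDiffOn ℝ (⊤ : ℕ∞) (fun p => v j p i) U) (j i : Fin m) :
    ContDiffOn ℝ (⊤ : ℕ∞) (fun r => star (v j r i)) U := by
  have h1 : (fun r : Phase n => star (v j r i)) = (⇑Complex.conjCLE ∘ fun r => v j r i) := by
    funext r; simp [Complex.conjCLE_apply]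
  rw [h1]
  exact Complex.conjCLE.contDiff.comp_contDiffOn (hv j i)

lemma smooth_projEntry (hv : ∀ j i, ContDiffOn ℝ (⊤ : ℕ∞) (fun p => v j p i) U) (j i i' : Fin m) :
    ContDiffOn ℝ (⊤ : ℕ∞) (fun r => Proj1 (v j) r i i') U := by
  have h1 : (fun r => Proj1 (v j) r i i') = fun r => v j r i * star (v j r i') := by
    funext r; simp [Proj1, Matrix.vecMulVec_apply]
  rw [h1]
  exact (hv j i).mul (smooth_star_v hv j i')

lemma trace2 (hU : IsOpen U) (hv : ∀ j i, ContDiffOn ℝ (⊤ : ℕ∞) (fun p => v j p i) U)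
    (hON : ∀ p ∈ U, ∀ j k, star (v j p) ⬝ᵥ v k p = if j = k then 1 else 0)
    {p : Phase n} (hp : p ∈ U) (j : Fin m) (d1 d2 : Phase n) :
    (pdM2 (Proj1 (v j)) d1 d2 p).trace = 0 := by
  classical
  set e : Fin m → Phase n → ℂ := fun i r => Proj1 (v j) r i i with he
  have hsm : ∀ i, ContDiffOn ℝ (⊤ : ℕ∞) (e i) U := fun i => smooth_projEntry hv j i i
  have hdiffe : ∀ (i : Fin m) (q : Phase n), q ∈ U → DifferentiableAt ℝ (e i) q := fun i q hq =>
    ((hsm i).differentiableOn (by simp)).differentiableAt (hU.mem_nhds hq)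
  have hdiffg : ∀ i : Fin m, DifferentiableAt ℝ (fun q => fderiv ℝ (e i) q d2) p := by
    intro i
    have h1 : ContDiffOn ℝ (⊤ : ℕ∞) (fun q => fderiv ℝ (e i) q) U :=
      (hsm i).fderiv_of_isOpen hU (by simp)
    have h2 : ContDiffOn ℝ (⊤ : ℕ∞) (fun q => fderiv ℝ (e i) q d2) U :=
      h1.clm_apply contDiffOn_const
    exact (h2.differentiableOn (by simp)).differentiableAt (hU.mem_nhds hp)
  have h1 : (pdM2 (Proj1 (v j)) d1 d2 p).trace
      = fderiv ℝ (fun q => ∑ i, fderiv ℝ (e i) q d2) p d1 := by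
    rw [fderiv_fun_sum fun i _ => hdiffg i]
    simp only [Matrix.trace, Matrix.diag, pdM2, pdM, Matrix.of_apply,
      ContinuousLinearMap.sum_apply]
    rfl
  have h2 : (fun q => ∑ i, fderiv ℝ (e i) q d2) =ᶠ[nhds p] fun _ => (0 : ℂ) := by
    filter_upwards [hU.mem_nhds hp] with q hq
    rw [show (∑ i, fderiv ℝ (e i) q d2) = fderiv ℝ (fun r => ∑ i, e i r) q d2 by
      rw [fderiv_fun_sum fun i _ => hdiffe i q hq]
      simp [ContinuousLinearMap.sum_apply]]
    have hconst : (fun r => ∑ i, e i r) =ᶠ[nhds q] fun _ => (1 : ℂ) := by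
      filter_upwards [hU.mem_nhds hq] with r hr
      have hONr := hON r hr j j
      simp only [dotProduct, Pi.star_apply, if_pos rfl, if_true, eq_self_iff_true] at hONr
      simp only [he, Proj1, Matrix.vecMulVec_apply, Pi.star_apply]
      rw [← hONr]
      exact Finset.sum_congr rfl fun i _ => mul_comm _ _
    rw [hconst.fderiv_eq, fderiv_fun_const]
    rfl
  rw [h1, h2.fderiv_eq, fderiv_fun_const]
  rfl

lemma complete_dot (hON : ∀ p ∈ U, ∀ j k, star (v j p) ⬝ᵥ v k p = if j = k then 1 else 0)
    {p : Phase n} (hp : p ∈ U) (a b : Fin m → ℂ) :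
    ∑ l, (a ⬝ᵥ v l p) * (star (v l p) ⬝ᵥ b) = a ⬝ᵥ b := by
  have hterm : ∀ l, (a ⬝ᵥ v l p) * (star (v l p) ⬝ᵥ b) = a ⬝ᵥ (Proj1 (v l) p).mulVec b := by
    intro l
    rw [proj_mulVec, dotProduct_smul, smul_eq_mul]
    ring
  rw [Finset.sum_congr rfl fun l _ => hterm l, ← dot_sum, ← sum_mulVec, F3 hON hp]
  rw [Matrix.one_mulVec]
end Main
end Proof7

theorem statement_7 {n m : ℕ} (U : Set (Phase n)) (hU : IsOpen U)
    (v : Fin m → Phase n → Fin m → ℂ) (h : Fin m → Phase n → ℝ)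
    (A₀ : Phase n → Matrix (Fin m) (Fin m) ℂ)
    (hvsmooth : ∀ j i, ContDiffOn ℝ (⊤ : ℕ∞) (fun p => v j p i) U)
    (hhsmooth : ∀ j, ContDiffOn ℝ (⊤ : ℕ∞) (h j) U)
    (hA₀smooth : ∀ i j, ContDiffOn ℝ (⊤ : ℕ∞) (fun p => A₀ p i j) U)
    (hON : ∀ p ∈ U, ∀ j k, star (v j p) ⬝ᵥ v k p = if j = k then 1 else 0)
    (hdist : ∀ p ∈ U, ∀ j k, j ≠ k → h j p ≠ h k p) :
    ∀ p ∈ U, ∀ j : Fin m,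
      (ufun A₀ h v j p
        - (Complex.I / 2) • ∑ α : Fin n, pdM2 (Proj1 (v j)) (dX n α) (dXi n α) p).trace
      = -Complex.I * sbrack (v j) p := by
  intro p hp j
  classical
  have htr2 : (∑ α : Fin n, pdM2 (Proj1 (v j)) (dX n α) (dXi n α) p).trace = 0 := by
    rw [Matrix.trace_sum]
    exact Finset.sum_eq_zero fun α _ => Proof7.trace2 hU hvsmooth hON hp j _ _
  rw [Matrix.trace_sub, Matrix.trace_smul, htr2, smul_zero, sub_zero]
  rw [ufun, Matrix.trace_sum]
  have hterm : ∀ l ∈ Finset.univ.filter (fun l => l ≠ j),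
      ((((h j p : ℝ) : ℂ) - ((h l p : ℝ) : ℂ))⁻¹ • (Proj1 (v l) p * Bfun A₀ h v j p
        + Proj1 (v j) p * Bfun A₀ h v l p)).trace
      = Complex.I * ∑ α : Fin n,
          ((star (v l p) ⬝ᵥ pdV (v j) (dX n α) p) * (pdVstar (v j) (dXi n α) p ⬝ᵥ v l p)
           - (pdVstar (v j) (dX n α) p ⬝ᵥ v l p) * (star (v l p) ⬝ᵥ pdV (v j) (dXi n α) p)) := by
    intro l hl
    have hlj : l ≠ j := (Finset.mem_filter.mp hl).2
    have hne : (((h j p : ℝ) : ℂ) - ((h l p : ℝ) : ℂ)) ≠ 0 := by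
      intro hEq
      exact hdist p hp j l (Ne.symm hlj) (by exact_mod_cast sub_eq_zero.mp hEq)
    rw [Matrix.trace_smul, Matrix.trace_add, Proj1, Proj1, Proof7.trace_vecMulVec_mul,
      Proof7.trace_vecMulVec_mul,
      Proof7.claimA hU hvsmooth hhsmooth hON hp hlj,
      Proof7.claimB hU hvsmooth hhsmooth hON hp hlj, smul_eq_mul]
    rw [show (∑ α : Fin n, ((((h j p : ℝ) : ℂ) - ((h l p : ℝ) : ℂ))
          * ((star (v l p) ⬝ᵥ pdV (v j) (dX n α) p)
              * (pdVstar (v j) (dXi n α) p ⬝ᵥ v l p))))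
        = (((h j p : ℝ) : ℂ) - ((h l p : ℝ) : ℂ))
          * ∑ α : Fin n, ((star (v l p) ⬝ᵥ pdV (v j) (dX n α) p)
              * (pdVstar (v j) (dXi n α) p ⬝ᵥ v l p)) from (Finset.mul_sum _ _ _).symm]
    rw [show (∑ α : Fin n, ((((h l p : ℝ) : ℂ) - ((h j p : ℝ) : ℂ))
          * ((pdVstar (v j) (dX n α) p ⬝ᵥ v l p)
              * (star (v l p) ⬝ᵥ pdV (v j) (dXi n α) p))))
        = (((h l p : ℝ) : ℂ) - ((h j p : ℝ) : ℂ))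
          * ∑ α : Fin n, ((pdVstar (v j) (dX n α) p ⬝ᵥ v l p)
              * (star (v l p) ⬝ᵥ pdV (v j) (dXi n α) p)) from (Finset.mul_sum _ _ _).symm]
    rw [Finset.sum_sub_distrib]
    field_simp
    ring
  rw [Finset.sum_congr rfl hterm, ← Finset.mul_sum, Finset.sum_comm]
  have hinner : ∀ α : Fin n,
      (∑ l ∈ Finset.univ.filter (fun l => l ≠ j),
        ((star (v l p) ⬝ᵥ pdV (v j) (dX n α) p) * (pdVstar (v j) (dXi n α) p ⬝ᵥ v l p)
          - (pdVstar (v j) (dX n α) p ⬝ᵥ v l p) * (star (v l p) ⬝ᵥ pdV (v j) (dXi n α) p)))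
      = pdVstar (v j) (dXi n α) p ⬝ᵥ pdV (v j) (dX n α) p
        - pdVstar (v j) (dX n α) p ⬝ᵥ pdV (v j) (dXi n α) p := by
    intro α
    rw [Finset.filter_ne', Finset.sum_erase_eq_sub (Finset.mem_univ j)]
    have hX : ∑ l, (star (v l p) ⬝ᵥ pdV (v j) (dX n α) p) * (pdVstar (v j) (dXi n α) p ⬝ᵥ v l p)
        = pdVstar (v j) (dXi n α) p ⬝ᵥ pdV (v j) (dX n α) p := by
      rw [← Proof7.complete_dot hON hp (pdVstar (v j) (dXi n α) p) (pdV (v j) (dX n α) p)]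
      exact Finset.sum_congr rfl fun l _ => mul_comm _ _
    have hY : ∑ l, (pdVstar (v j) (dX n α) p ⬝ᵥ v l p) * (star (v l p) ⬝ᵥ pdV (v j) (dXi n α) p)
        = pdVstar (v j) (dX n α) p ⬝ᵥ pdV (v j) (dXi n α) p :=
      Proof7.complete_dot hON hp _ _
    have hjj1 := Proof7.F2 hU hvsmooth hON hp j j (dX n α)
    have hjj2 := Proof7.F2 hU hvsmooth hON hp j j (dXi n α)
    rw [Finset.sum_sub_distrib, hX, hY]
    linear_combination (star (v j p) ⬝ᵥ pdV (v j) (dXi n α) p) * hjj1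
      - (star (v j p) ⬝ᵥ pdV (v j) (dX n α) p) * hjj2
  rw [Finset.sum_congr rfl fun α _ => hinner α, sbrack, Finset.sum_sub_distrib,
    Finset.sum_sub_distrib]
  ring
end
end

section
/- Let U ⊆ ℝⁿ_x × ℝⁿ_ξ be open, let v^{(1)},…,v^{(m)} : U → ℂᵐ be C^∞ functions whose values at each point of U form an orthonormal basis of ℂᵐ, let P^{(j)} := v^{(j)} [v^{(j)}]*, let h^{(1)},…,h^{(m)} : U → ℝ be C^∞ functions that are pairwise distinct at every point of U, and set A₁ := Σ_k h^{(k)} P^{(k)}. Then for each fixed j, at every point of U, (i/2) tr Σ_{l ≠ j} [ P^{(l)} {A₁, P^{(j)}} + P^{(j)} {A₁, P^{(l)}} ] / (h^{(j)} − h^{(l)}) = −i {[v^{(j)}]*, v^{(j)}}. -/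
open Matrix MeasureTheory

noncomputable section

noncomputable section Alg
variable {m : ℕ}

lemma mulVec_vecMulVec' (x y z : Fin m → ℂ) : (vecMulVec x y) *ᵥ z = (y ⬝ᵥ z) • x := by
  ext i; simp [vecMulVec, mulVec, dotProduct, Finset.mul_sum, mul_comm, mul_left_comm]

lemma trace_vecMulVec_mul' (x y : Fin m → ℂ) (M : Matrix (Fin m) (Fin m) ℂ) :
    (vecMulVec x y * M).trace = y ⬝ᵥ M *ᵥ x := by
  simp only [trace, diag, Matrix.mul_apply, vecMulVec_apply, mulVec, dotProduct]
  rw [Finset.sum_comm]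
  exact Finset.sum_congr rfl fun j _ => by
    rw [Finset.mul_sum]; exact Finset.sum_congr rfl fun i _ => by ring

lemma sum_mulVec' {ι : Type*} (s : Finset ι) (M : ι → Matrix (Fin m) (Fin m) ℂ) (x : Fin m → ℂ) :
    (∑ k ∈ s, M k) *ᵥ x = ∑ k ∈ s, M k *ᵥ x := by
  ext i
  simp [mulVec, dotProduct, Finset.sum_apply, Matrix.sum_apply, Finset.sum_mul]
  rw [Finset.sum_comm]

lemma dotProduct_sum' {ι : Type*} (s : Finset ι) (x : Fin m → ℂ) (f : ι → Fin m → ℂ) :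
    x ⬝ᵥ (∑ k ∈ s, f k) = ∑ k ∈ s, x ⬝ᵥ f k := by
  simp [dotProduct, Finset.mul_sum, Finset.sum_apply]
  rw [Finset.sum_comm]

lemma conj_dot' (x y : Fin m → ℂ) : star x ⬝ᵥ y = starRingEnd ℂ (star y ⬝ᵥ x) := by
  simp [dotProduct, map_sum, mul_comm]

/-- rank-one projection -/
def PP (w : Fin m → Fin m → ℂ) (k : Fin m) : Matrix (Fin m) (Fin m) ℂ :=
  vecMulVec (w k) (star (w k))

/-- derivative of projection -/
def PD (w u : Fin m → Fin m → ℂ) (k : Fin m) : Matrix (Fin m) (Fin m) ℂ :=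
  vecMulVec (u k) (star (w k)) + vecMulVec (w k) (star (u k))

/-- derivative of A1 -/
def AD (w u : Fin m → Fin m → ℂ) (h hu : Fin m → ℝ) : Matrix (Fin m) (Fin m) ℂ :=
  ∑ k, ((hu k : ℂ) • PP w k + (h k : ℂ) • PD w u k)

variable (w : Fin m → Fin m → ℂ)

lemma AD_pair (u : Fin m → Fin m → ℂ) (h hu : Fin m → ℝ)
    (hON : ∀ k l, star (w k) ⬝ᵥ w l = if k = l then 1 else 0)
    (hc : ∀ k l, star (u k) ⬝ᵥ w l + star (w k) ⬝ᵥ u l = 0)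
    (l j : Fin m) (hlj : l ≠ j) :
    star (w l) ⬝ᵥ (AD w u h hu) *ᵥ (w j) = ((h j : ℂ) - h l) * (star (w l) ⬝ᵥ u j) := by
  have hulj : star (u l) ⬝ᵥ w j = -(star (w l) ⬝ᵥ u j) := by
    have := hc l j; linear_combination this
  simp only [AD, sum_mulVec', add_mulVec, smul_mulVec, PP, PD, mulVec_vecMulVec',
    dotProduct_sum', dotProduct_add, dotProduct_smul, hON, smul_eq_mul]
  rw [Finset.sum_congr rfl (fun k _ => show _ =
      ((if j = k then (h j : ℂ) * (star (w l) ⬝ᵥ u j) else 0)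
       + (if l = k then (h l : ℂ) * (star (u l) ⬝ᵥ w j) else 0)) from by
    by_cases hkj : k = j <;> by_cases hlk : l = k
    · exact absurd (hlk.trans hkj) hlj
    · subst hkj; simp [hlk, Ne.symm hlk]
    · subst hlk; simp [hkj, Ne.symm hkj]
    · simp [hkj, hlk, Ne.symm hkj, Ne.symm hlk])]
  rw [Finset.sum_add_distrib, Finset.sum_ite_eq, Finset.sum_ite_eq]
  simp [hulj]
  ring

lemma PD_mulVec (u : Fin m → Fin m → ℂ) (k : Fin m) (z : Fin m → ℂ) :
    (PD w u k) *ᵥ z = (star (w k) ⬝ᵥ z) • u k + (star (u k) ⬝ᵥ z) • w k := by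
  rw [PD, add_mulVec, mulVec_vecMulVec', mulVec_vecMulVec']

lemma trace1 (u u' : Fin m → Fin m → ℂ) (h hu : Fin m → ℝ)
    (hON : ∀ k l, star (w k) ⬝ᵥ w l = if k = l then 1 else 0)
    (hc : ∀ k l, star (u k) ⬝ᵥ w l + star (w k) ⬝ᵥ u l = 0)
    (l j : Fin m) (hlj : l ≠ j) :
    (PP w l * (AD w u h hu * PD w u' j)).trace
      = starRingEnd ℂ (star (w l) ⬝ᵥ u' j) * (((h j : ℂ) - h l) * (star (w l) ⬝ᵥ u j)) := by
  rw [PP, trace_vecMulVec_mul', ← mulVec_mulVec, PD_mulVec]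
  rw [show star (w j) ⬝ᵥ w l = 0 from by rw [hON]; simp [Ne.symm hlj]]
  rw [show star (u' j) ⬝ᵥ w l = starRingEnd ℂ (star (w l) ⬝ᵥ u' j) from conj_dot' _ _]
  rw [zero_smul, zero_add, mulVec_smul, dotProduct_smul, smul_eq_mul,
    AD_pair w u h hu hON hc l j hlj]

lemma trace2 (u u' : Fin m → Fin m → ℂ) (h hu : Fin m → ℝ)
    (hON : ∀ k l, star (w k) ⬝ᵥ w l = if k = l then 1 else 0)
    (hc : ∀ k l, star (u k) ⬝ᵥ w l + star (w k) ⬝ᵥ u l = 0)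
    (hc' : ∀ k l, star (u' k) ⬝ᵥ w l + star (w k) ⬝ᵥ u' l = 0)
    (l j : Fin m) (hlj : l ≠ j) :
    (PP w j * (AD w u h hu * PD w u' l)).trace
      = (star (w l) ⬝ᵥ u' j) * (((h l : ℂ) - h j) * starRingEnd ℂ (star (w l) ⬝ᵥ u j)) := by
  rw [PP, trace_vecMulVec_mul', ← mulVec_mulVec, PD_mulVec]
  rw [show star (w l) ⬝ᵥ w j = 0 from by rw [hON]; simp [hlj]]
  rw [show star (u' l) ⬝ᵥ w j = -(star (w l) ⬝ᵥ u' j) from by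
    have := hc' l j; linear_combination this]
  rw [zero_smul, zero_add, mulVec_smul, dotProduct_smul, smul_eq_mul,
    AD_pair w u h hu hON hc j l (Ne.symm hlj)]
  rw [show star (w j) ⬝ᵥ u l = -starRingEnd ℂ (star (w l) ⬝ᵥ u j) from by
    have h1 := hc j l
    have h2 := conj_dot' (u j) (w l)
    linear_combination h1 - h2]
  ring

lemma complete (hON : ∀ k l, star (w k) ⬝ᵥ w l = if k = l then 1 else 0) (i i' : Fin m) :
    (∑ l, w l i * starRingEnd ℂ (w l i')) = if i = i' then 1 else 0 := by
  have h1 : (Matrix.of fun i k => w k i)ᴴ * (Matrix.of fun i k => w k i) = 1 := by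
    ext k l
    have := hON k l
    simpa [Matrix.mul_apply, Matrix.one_apply, dotProduct, conjTranspose_apply] using this
  have h2 := mul_eq_one_comm.mp h1
  have := congrFun (congrFun h2 i) i'
  simpa [Matrix.mul_apply, Matrix.one_apply, conjTranspose_apply] using this

lemma parseval (hON : ∀ k l, star (w k) ⬝ᵥ w l = if k = l then 1 else 0) (x y : Fin m → ℂ) :
    (∑ l, (star (w l) ⬝ᵥ x) * starRingEnd ℂ (star (w l) ⬝ᵥ y)) = star y ⬝ᵥ x := by
  have expand : ∀ l, (star (w l) ⬝ᵥ x) * starRingEnd ℂ (star (w l) ⬝ᵥ y)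
      = ∑ i, ∑ i', (x i * starRingEnd ℂ (y i')) * (w l i' * starRingEnd ℂ (w l i)) := by
    intro l
    simp only [dotProduct, Pi.star_apply, map_sum, Finset.sum_mul_sum]
    exact Finset.sum_congr rfl fun i _ => Finset.sum_congr rfl fun i' _ => by
      rw [_root_.map_mul]
      simp only [Complex.star_def, Complex.conj_conj]
      ring
  rw [Finset.sum_congr rfl (fun l _ => expand l)]
  rw [Finset.sum_comm]
  rw [Finset.sum_congr rfl (fun i (_ : i ∈ Finset.univ) => Finset.sum_comm
    (f := fun l i' => (x i * starRingEnd ℂ (y i')) * (w l i' * starRingEnd ℂ (w l i))))]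
  have inner : ∀ i i' : Fin m, (∑ l, (x i * starRingEnd ℂ (y i')) * (w l i' * starRingEnd ℂ (w l i)))
      = (x i * starRingEnd ℂ (y i')) * (if i' = i then 1 else 0) := by
    intro i i'
    rw [← Finset.mul_sum, complete w hON i' i]
  rw [Finset.sum_congr rfl (fun i _ => Finset.sum_congr rfl (fun i' _ => inner i i'))]
  simp only [mul_ite, mul_one, mul_zero, Finset.sum_ite_eq', Finset.mem_univ, if_true]
  simp [dotProduct, mul_comm]

lemma alg (a b : Fin m → Fin m → ℂ) (h ha hb : Fin m → ℝ) (j : Fin m)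
    (hON : ∀ k l, star (w k) ⬝ᵥ w l = if k = l then 1 else 0)
    (hca : ∀ k l, star (a k) ⬝ᵥ w l + star (w k) ⬝ᵥ a l = 0)
    (hcb : ∀ k l, star (b k) ⬝ᵥ w l + star (w k) ⬝ᵥ b l = 0)
    (hdist : ∀ l, l ≠ j → (h j : ℂ) ≠ (h l : ℂ)) :
    (∑ l ∈ Finset.univ.filter (fun l => l ≠ j), ((h j : ℂ) - (h l : ℂ))⁻¹ •
        (PP w l * (AD w a h ha * PD w b j - AD w b h hb * PD w a j)
         + PP w j * (AD w a h ha * PD w b l - AD w b h hb * PD w a l))).trace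
    = -2 * (star (a j) ⬝ᵥ b j - star (b j) ⬝ᵥ a j) := by
  rw [Matrix.trace_sum]
  rw [Finset.sum_congr rfl (fun l hl => show
      (((h j : ℂ) - (h l : ℂ))⁻¹ •
        (PP w l * (AD w a h ha * PD w b j - AD w b h hb * PD w a j)
         + PP w j * (AD w a h ha * PD w b l - AD w b h hb * PD w a l))).trace
      = 2 * ((star (w l) ⬝ᵥ a j) * starRingEnd ℂ (star (w l) ⬝ᵥ b j)
           - (star (w l) ⬝ᵥ b j) * starRingEnd ℂ (star (w l) ⬝ᵥ a j)) from by
    rw [Finset.mem_filter] at hl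
    have hlj := hl.2
    have hne : (h j : ℂ) - (h l : ℂ) ≠ 0 := sub_ne_zero.mpr (hdist l hlj)
    rw [trace_smul, smul_eq_mul, mul_sub, mul_sub, trace_add, trace_sub, trace_sub,
      trace1 w a b h ha hON hca l j hlj, trace1 w b a h hb hON hcb l j hlj,
      trace2 w a b h ha hON hca hcb l j hlj, trace2 w b a h hb hON hcb hca l j hlj]
    field_simp
    ring)]
  rw [show Finset.univ.filter (fun l => l ≠ j) = Finset.univ.erase j from
    Finset.filter_ne' _ _]
  rw [Finset.sum_erase_eq_sub (Finset.mem_univ j)]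
  have h1 : starRingEnd ℂ (star (w j) ⬝ᵥ a j) = -(star (w j) ⬝ᵥ a j) := by
    linear_combination (hca j j) - (conj_dot' (a j) (w j))
  have h2 : starRingEnd ℂ (star (w j) ⬝ᵥ b j) = -(star (w j) ⬝ᵥ b j) := by
    linear_combination (hcb j j) - (conj_dot' (b j) (w j))
  rw [show (2 : ℂ) * ((star (w j) ⬝ᵥ a j) * starRingEnd ℂ (star (w j) ⬝ᵥ b j)
      - (star (w j) ⬝ᵥ b j) * starRingEnd ℂ (star (w j) ⬝ᵥ a j)) = 0 from by
    rw [h1, h2]; ring]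
  rw [sub_zero]
  have e1 := parseval w hON (a j) (b j)
  have e2 := parseval w hON (b j) (a j)
  calc (∑ l, 2 * ((star (w l) ⬝ᵥ a j) * starRingEnd ℂ (star (w l) ⬝ᵥ b j)
           - (star (w l) ⬝ᵥ b j) * starRingEnd ℂ (star (w l) ⬝ᵥ a j)))
      = 2 * ((∑ l, (star (w l) ⬝ᵥ a j) * starRingEnd ℂ (star (w l) ⬝ᵥ b j))
           - (∑ l, (star (w l) ⬝ᵥ b j) * starRingEnd ℂ (star (w l) ⬝ᵥ a j))) := by
        rw [← Finset.sum_sub_distrib, Finset.mul_sum]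
    _ = -2 * (star (a j) ⬝ᵥ b j - star (b j) ⬝ᵥ a j) := by rw [e1, e2]; ring

section Bridge
variable {n m : ℕ}

lemma pdVstar_eq_star (v : Phase n → Fin m → ℂ) (d p : Phase n) :
    pdVstar v d p = star (pdV v d p) := by
  funext i
  simp only [pdVstar, pdV, Pi.star_apply]
  rw [fderiv_star]; simp

lemma fderiv_ofReal' (f : Phase n → ℝ) (p : Phase n) (hf : DifferentiableAt ℝ f p)
    (d : Phase n) :
    fderiv ℝ (fun q => ((f q : ℝ) : ℂ)) p d = ((fderiv ℝ f p d : ℝ) : ℂ) := by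
  have h1 : HasFDerivAt (fun q => ((f q : ℝ) : ℂ))
      (Complex.ofRealCLM.comp (fderiv ℝ f p)) p :=
    (Complex.ofRealCLM.hasFDerivAt).comp p hf.hasFDerivAt
  rw [h1.fderiv]; rfl

lemma pdM_Proj1 (v : Phase n → Fin m → ℂ) (p d : Phase n)
    (hv : ∀ i, DifferentiableAt ℝ (fun q => v q i) p) :
    pdM (Proj1 v) d p = vecMulVec (pdV v d p) (star (v p)) + vecMulVec (v p) (star (pdV v d p)) := by
  ext i i'
  have e : (fun q => Proj1 v q i i') = fun q => (v q i) * star (v q i') := by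
    funext q; simp [Proj1, vecMulVec_apply]
  simp only [pdM, Matrix.of_apply, Matrix.add_apply, vecMulVec_apply, Pi.star_apply]
  rw [e, fderiv_fun_mul (hv i) ((hv i').star)]
  simp only [ContinuousLinearMap.add_apply, ContinuousLinearMap.smul_apply, smul_eq_mul]
  rw [fderiv_star]
  simp only [ContinuousLinearMap.comp_apply]
  simp [pdV]
  ring

lemma pdM_A1 (v : Fin m → Phase n → Fin m → ℂ) (h : Fin m → Phase n → ℝ) (p d : Phase n)
    (hv : ∀ k i, DifferentiableAt ℝ (fun q => v k q i) p)
    (hh : ∀ k, DifferentiableAt ℝ (h k) p) :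
    pdM (A1 h v) d p = AD (fun k => v k p) (fun k => pdV (v k) d p)
      (fun k => h k p) (fun k => pdS (h k) d p) := by
  ext i i'
  have e : (fun q => A1 h v q i i')
      = fun q => ∑ k, ((h k q : ℂ) * (v k q i * star (v k q i'))) := by
    funext q
    simp [A1, Proj1, vecMulVec_apply, Matrix.sum_apply]
  simp only [pdM, Matrix.of_apply]
  rw [e, fderiv_fun_sum (fun k _ =>
    ((show DifferentiableAt ℝ (fun q => ((h k q : ℝ) : ℂ)) p from
        Complex.ofRealCLM.differentiableAt.comp p (hh k)).fun_mul
      ((hv k i).fun_mul ((hv k i').star))))]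
  simp only [ContinuousLinearMap.sum_apply]
  rw [Finset.sum_congr rfl (fun k _ => show
      fderiv ℝ (fun q => ((h k q : ℂ) * (v k q i * star (v k q i')))) p d
      = ((pdS (h k) d p : ℂ) * (v k p i * star (v k p i'))
        + (h k p : ℂ) * (pdV (v k) d p i * star (v k p i')
            + v k p i * star (pdV (v k) d p i'))) from by
    rw [fderiv_fun_mul (show DifferentiableAt ℝ (fun q => ((h k q : ℝ) : ℂ)) p from
        Complex.ofRealCLM.differentiableAt.comp p (hh k))
      ((hv k i).fun_mul ((hv k i').star))]
    simp only [ContinuousLinearMap.add_apply, ContinuousLinearMap.smul_apply, smul_eq_mul]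
    rw [fderiv_fun_mul (hv k i) ((hv k i').star)]
    simp only [ContinuousLinearMap.add_apply, ContinuousLinearMap.smul_apply, smul_eq_mul]
    rw [fderiv_star]
    simp only [ContinuousLinearMap.comp_apply]
    have := fderiv_ofReal' (h k) p (hh k) d
    simp only [pdS, pdV, this]
    simp
    ring)]
  simp only [AD, PP, PD, Matrix.sum_apply, Matrix.add_apply, Matrix.smul_apply,
    vecMulVec_apply, Pi.star_apply, smul_eq_mul]

lemma compat' (v : Fin m → Phase n → Fin m → ℂ) {U : Set (Phase n)} (hU : IsOpen U)
    {p : Phase n} (hp : p ∈ U)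
    (hv : ∀ k i, DifferentiableAt ℝ (fun q => v k q i) p)
    (hON : ∀ q ∈ U, ∀ j k, star (v j q) ⬝ᵥ v k q = if j = k then 1 else 0)
    (d : Phase n) (k l : Fin m) :
    star (pdV (v k) d p) ⬝ᵥ (v l p) + star (v k p) ⬝ᵥ pdV (v l) d p = 0 := by
  have heq : (fun q => ∑ i, star (v k q i) * v l q i)
      =ᶠ[nhds p] (fun _ => if k = l then (1 : ℂ) else 0) := by
    filter_upwards [hU.mem_nhds hp] with q hq
    simpa [dotProduct] using hON q hq k l
  have h0 : fderiv ℝ (fun q => ∑ i, star (v k q i) * v l q i) p = 0 := by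
    rw [heq.fderiv_eq]; exact fderiv_const_apply _
  have h1 : fderiv ℝ (fun q => ∑ i, star (v k q i) * v l q i) p d = 0 := by
    rw [h0]; rfl
  rw [fderiv_fun_sum (fun i _ => ((hv k i).star.fun_mul (hv l i)))] at h1
  simp only [ContinuousLinearMap.sum_apply] at h1
  rw [Finset.sum_congr rfl (fun i _ => show
      fderiv ℝ (fun q => star (v k q i) * v l q i) p d
      = star (v k p i) * pdV (v l) d p i + v l p i * star (pdV (v k) d p i) from by
    rw [fderiv_fun_mul ((hv k i).star) (hv l i)]
    simp only [ContinuousLinearMap.add_apply, ContinuousLinearMap.smul_apply, smul_eq_mul]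
    rw [fderiv_star]
    simp only [ContinuousLinearMap.comp_apply]
    simp [pdV])] at h1
  rw [Finset.sum_add_distrib] at h1
  simp only [dotProduct, Pi.star_apply]
  rw [← h1]
  rw [add_comm]
  congr 1
  exact Finset.sum_congr rfl fun i _ => mul_comm _ _

end Bridge
theorem statement_8 {n m : ℕ} (U : Set (Phase n)) (hU : IsOpen U)
    (v : Fin m → Phase n → Fin m → ℂ) (h : Fin m → Phase n → ℝ)
    (hvsmooth : ∀ j i, ContDiffOn ℝ (⊤ : ℕ∞) (fun p => v j p i) U)
    (hhsmooth : ∀ j, ContDiffOn ℝ (⊤ : ℕ∞) (h j) U)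
    (hON : ∀ p ∈ U, ∀ j k, star (v j p) ⬝ᵥ v k p = if j = k then 1 else 0)
    (hdist : ∀ p ∈ U, ∀ j k, j ≠ k → h j p ≠ h k p) :
    ∀ p ∈ U, ∀ j : Fin m,
      (Complex.I / 2) * (∑ l ∈ Finset.univ.filter (fun l => l ≠ j),
          ((h j p : ℂ) - (h l p : ℂ))⁻¹ •
            (Proj1 (v l) p * mbrack (A1 h v) (Proj1 (v j)) p
             + Proj1 (v j) p * mbrack (A1 h v) (Proj1 (v l)) p)).trace
      = -Complex.I * sbrack (v j) p := by
  intro p hp j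
  have hdv : ∀ k i, DifferentiableAt ℝ (fun q => v k q i) p :=
    fun k i => ((hvsmooth k i).contDiffAt (hU.mem_nhds hp)).differentiableAt (by simp)
  have hdh : ∀ k, DifferentiableAt ℝ (h k) p :=
    fun k => ((hhsmooth k).contDiffAt (hU.mem_nhds hp)).differentiableAt (by simp)
  have hONp : ∀ k l, star (v k p) ⬝ᵥ v l p = if k = l then 1 else 0 := hON p hp
  have hcomp : ∀ d k l,
      star (pdV (v k) d p) ⬝ᵥ (v l p) + star (v k p) ⬝ᵥ pdV (v l) d p = 0 :=
    fun d k l => compat' v hU hp hdv hON d k l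
  have hdistC : ∀ l, l ≠ j → ((h j p : ℂ)) ≠ ((h l p : ℂ)) :=
    fun l hlj e => hdist p hp j l (Ne.symm hlj) (Complex.ofReal_inj.mp e)
  have key : ∀ l, mbrack (A1 h v) (Proj1 (v l)) p
      = ∑ α : Fin n,
          (AD (fun k => v k p) (fun k => pdV (v k) (dX n α) p)
              (fun k => h k p) (fun k => pdS (h k) (dX n α) p)
            * PD (fun k => v k p) (fun k => pdV (v k) (dXi n α) p) l
          - AD (fun k => v k p) (fun k => pdV (v k) (dXi n α) p)
              (fun k => h k p) (fun k => pdS (h k) (dXi n α) p)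
            * PD (fun k => v k p) (fun k => pdV (v k) (dX n α) p) l) := by
    intro l
    simp only [mbrack]
    refine Finset.sum_congr rfl fun α _ => ?_
    rw [pdM_A1 v h p (dX n α) hdv hdh, pdM_A1 v h p (dXi n α) hdv hdh,
      pdM_Proj1 (v l) p (dX n α) (hdv l), pdM_Proj1 (v l) p (dXi n α) (hdv l)]
    rfl
  have hPP : ∀ l, Proj1 (v l) p = PP (fun k => v k p) l := fun l => rfl
  have step1 : ∀ l : Fin m,
      ((h j p : ℂ) - (h l p : ℂ))⁻¹ • (Proj1 (v l) p * mbrack (A1 h v) (Proj1 (v j)) p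
        + Proj1 (v j) p * mbrack (A1 h v) (Proj1 (v l)) p)
      = ∑ α : Fin n, ((h j p : ℂ) - (h l p : ℂ))⁻¹ •
          (PP (fun k => v k p) l
             * (AD (fun k => v k p) (fun k => pdV (v k) (dX n α) p)
                  (fun k => h k p) (fun k => pdS (h k) (dX n α) p)
                * PD (fun k => v k p) (fun k => pdV (v k) (dXi n α) p) j
              - AD (fun k => v k p) (fun k => pdV (v k) (dXi n α) p)
                  (fun k => h k p) (fun k => pdS (h k) (dXi n α) p)
                * PD (fun k => v k p) (fun k => pdV (v k) (dX n α) p) j)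
           + PP (fun k => v k p) j
             * (AD (fun k => v k p) (fun k => pdV (v k) (dX n α) p)
                  (fun k => h k p) (fun k => pdS (h k) (dX n α) p)
                * PD (fun k => v k p) (fun k => pdV (v k) (dXi n α) p) l
              - AD (fun k => v k p) (fun k => pdV (v k) (dXi n α) p)
                  (fun k => h k p) (fun k => pdS (h k) (dXi n α) p)
                * PD (fun k => v k p) (fun k => pdV (v k) (dX n α) p) l)) := by
    intro l
    rw [key j, key l, hPP l, hPP j, Finset.mul_sum, Finset.mul_sum,
      ← Finset.sum_add_distrib, Finset.smul_sum]
  rw [Finset.sum_congr rfl (fun l _ => step1 l)]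
  rw [Finset.sum_comm]
  rw [Matrix.trace_sum]
  rw [Finset.sum_congr rfl (fun α (_ : α ∈ Finset.univ) =>
    alg (fun k => v k p) (fun k => pdV (v k) (dX n α) p) (fun k => pdV (v k) (dXi n α) p)
      (fun k => h k p) (fun k => pdS (h k) (dX n α) p) (fun k => pdS (h k) (dXi n α) p) j
      hONp (fun k l => hcomp (dX n α) k l) (fun k l => hcomp (dXi n α) k l) hdistC)]
  have hsb : sbrack (v j) p = ∑ α : Fin n,
      (star (pdV (v j) (dX n α) p) ⬝ᵥ pdV (v j) (dXi n α) p
       - star (pdV (v j) (dXi n α) p) ⬝ᵥ pdV (v j) (dX n α) p) := by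
    simp only [sbrack, pdVstar_eq_star]
  rw [hsb, Finset.mul_sum, Finset.mul_sum]
  rw [Finset.sum_congr rfl (fun α (_ : α ∈ Finset.univ) => show
      Complex.I / 2 * (-2 * (star (pdV (v j) (dX n α) p) ⬝ᵥ pdV (v j) (dXi n α) p
          - star (pdV (v j) (dXi n α) p) ⬝ᵥ pdV (v j) (dX n α) p))
      = -Complex.I * (star (pdV (v j) (dX n α) p) ⬝ᵥ pdV (v j) (dXi n α) p
          - star (pdV (v j) (dXi n α) p) ⬝ᵥ pdV (v j) (dX n α) p) from by ring)]
end Alg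
end
end

section
/- Let U ⊆ ℝⁿ_x × ℝⁿ_ξ be open and let v : U → ℂᵐ be a C^∞ column-function with v*v = 1 at every point of U. Put P := v v*. Then at every point of U, tr(P {P, P}) = {v*, v}. -/
open Matrix MeasureTheory

noncomputable section

lemma vmv_mul {m : ℕ} (x y z t : Fin m → ℂ) :
    vecMulVec x y * vecMulVec z t = (y ⬝ᵥ z) • vecMulVec x t := by
  ext i j
  simp only [Matrix.mul_apply, vecMulVec_apply, Matrix.smul_apply, smul_eq_mul, dotProduct,
    Finset.sum_mul]
  exact Finset.sum_congr rfl fun k _ => by ring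

lemma trace_vmv {m : ℕ} (x y : Fin m → ℂ) : (vecMulVec x y).trace = x ⬝ᵥ y := by
  simp [Matrix.trace, Matrix.diag, vecMulVec_apply, dotProduct]

lemma key {m : ℕ} (w a b : Fin m → ℂ) (hw : star w ⬝ᵥ w = 1)
    (ha : star a ⬝ᵥ w = -(star w ⬝ᵥ a)) (hb : star b ⬝ᵥ w = -(star w ⬝ᵥ b)) :
    (vecMulVec w (star w) *
      ((vecMulVec a (star w) + vecMulVec w (star a)) *
        (vecMulVec b (star w) + vecMulVec w (star b))
       - (vecMulVec b (star w) + vecMulVec w (star b)) *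
        (vecMulVec a (star w) + vecMulVec w (star a)))).trace
    = star a ⬝ᵥ b - star b ⬝ᵥ a := by
  simp only [mul_sub, mul_add, add_mul, vmv_mul, Matrix.mul_smul, Matrix.smul_mul, smul_smul,
    Matrix.trace_sub, Matrix.trace_add, Matrix.trace_smul, trace_vmv, smul_eq_mul]
  rw [dotProduct_comm w (star w), dotProduct_comm w (star a), dotProduct_comm w (star b),
    hw, ha, hb]
  ring

theorem statement_10 {n m : ℕ} (U : Set (Phase n)) (hU : IsOpen U)
    (v : Phase n → Fin m → ℂ)
    (hvsmooth : ∀ i, ContDiffOn ℝ (⊤ : ℕ∞) (fun p => v p i) U)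
    (hvnorm : ∀ p ∈ U, star (v p) ⬝ᵥ v p = 1) :
    ∀ p ∈ U, (Proj1 v p * mbrack (Proj1 v) (Proj1 v) p).trace = sbrack v p := by
  intro p hp
  have hdiff : ∀ i, DifferentiableAt ℝ (fun q => v q i) p := fun i =>
    ((hvsmooth i).contDiffAt (hU.mem_nhds hp)).differentiableAt (by simp)
  have hst : ∀ (i : Fin m) (d : Phase n),
      fderiv ℝ (fun q => (starRingEnd ℂ) (v q i)) p d
        = (starRingEnd ℂ) (fderiv ℝ (fun q => v q i) p d) := by
    intro i d
    rw [show (fun q => (starRingEnd ℂ) (v q i)) = (fun q => star (v q i)) from rfl, fderiv_star]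
    rfl
  have hstar : ∀ d, pdVstar v d p = star (pdV v d p) := by
    intro d; funext i
    simpa [pdVstar, pdV] using hst i d
  have hP : ∀ d, pdM (Proj1 v) d p
      = vecMulVec (pdV v d p) (star (v p)) + vecMulVec (v p) (star (pdV v d p)) := by
    intro d
    ext i j
    show fderiv ℝ (fun q => v q i * star (v q j)) p d = _
    rw [fderiv_fun_mul (hdiff i) ((hdiff j).star)]
    simp [vecMulVec_apply, pdV, hst]
    ring
  have hcon : ∀ d : Phase n, star (pdV v d p) ⬝ᵥ v p = -(star (v p) ⬝ᵥ pdV v d p) := by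
    intro d
    have hg : (fun q => star (v q) ⬝ᵥ v q) =ᶠ[nhds p] (fun _ => (1:ℂ)) :=
      Filter.eventuallyEq_of_mem (hU.mem_nhds hp) (fun q hq => hvnorm q hq)
    have h0 : fderiv ℝ (fun q => star (v q) ⬝ᵥ v q) p = 0 := by
      rw [hg.fderiv_eq]; exact fderiv_const_apply (1:ℂ)
    have hds : fderiv ℝ (fun q => star (v q) ⬝ᵥ v q) p =
        ∑ i, fderiv ℝ (fun q => star (v q i) * v q i) p := by
      rw [show (fun q => star (v q) ⬝ᵥ v q) = (fun q => ∑ i, star (v q i) * v q i) from rfl]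
      exact fderiv_fun_sum (fun i _ => ((hdiff i).star.mul (hdiff i)))
    have h2 : ∑ i, (star (v p i) * pdV v d p i + v p i * star (pdV v d p i)) = 0 := by
      have := congrArg (fun L : Phase n →L[ℝ] ℂ => L d) (hds.symm.trans h0)
      simp only [ContinuousLinearMap.zero_apply, ContinuousLinearMap.sum_apply] at this
      rw [← this]
      refine Finset.sum_congr rfl fun i _ => ?_
      rw [fderiv_fun_mul ((hdiff i).star) (hdiff i)]
      simp [pdV, hst]
    have h3 : ∑ i, v p i * star (pdV v d p i) = -(∑ i, star (v p i) * pdV v d p i) := by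
      rw [eq_neg_iff_add_eq_zero, ← Finset.sum_add_distrib, ← h2]
      exact Finset.sum_congr rfl fun i _ => by ring
    calc star (pdV v d p) ⬝ᵥ v p = ∑ i, v p i * star (pdV v d p i) := by
          simp [dotProduct, mul_comm]
      _ = -(star (v p) ⬝ᵥ pdV v d p) := by rw [h3]; rfl
  calc (Proj1 v p * mbrack (Proj1 v) (Proj1 v) p).trace
      = ∑ α : Fin n, (Proj1 v p * (pdM (Proj1 v) (dX n α) p * pdM (Proj1 v) (dXi n α) p
          - pdM (Proj1 v) (dXi n α) p * pdM (Proj1 v) (dX n α) p)).trace := by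
        rw [mbrack, Finset.mul_sum, Matrix.trace_sum]
    _ = sbrack v p := by
        rw [sbrack]
        refine Finset.sum_congr rfl fun α _ => ?_
        rw [hP, hP, hstar, hstar]
        exact key (v p) _ _ (hvnorm p hp) (hcon _) (hcon _)
end
end

section
/- Let U ⊆ ℝⁿ_x × ℝⁿ_ξ be open and let v^{(1)},…,v^{(m)} : U → ℂᵐ be C^∞ column-functions whose values at each point of U form an orthonormal basis of ℂᵐ. Then at every point of U, Σ_{j=1}^m {[v^{(j)}]*, v^{(j)}} = 0. -/
open Matrix MeasureTheory

noncomputable section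

theorem statement_11 {n m : ℕ} (U : Set (Phase n)) (hU : IsOpen U)
    (v : Fin m → Phase n → Fin m → ℂ)
    (hvsmooth : ∀ j i, ContDiffOn ℝ (⊤ : ℕ∞) (fun p => v j p i) U)
    (hON : ∀ p ∈ U, ∀ j k, star (v j p) ⬝ᵥ v k p = if j = k then 1 else 0) :
    ∀ p ∈ U, ∑ j : Fin m, sbrack (v j) p = 0 := by
  intro p hp
  have hdiff : ∀ j i, DifferentiableAt ℝ (fun q => v j q i) p := fun j i =>
    ((hvsmooth j i).differentiableOn (by simp)).differentiableAt (hU.mem_nhds hp)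
  set C : ℂ →L[ℝ] ℂ := Complex.conjCLE.toContinuousLinearMap with hC
  have hCapp : ∀ z : ℂ, C z = star z := fun z => rfl
  -- pdVstar is entrywise star of pdV
  have hstar : ∀ j (d : Phase n), pdVstar (v j) d p = star (pdV (v j) d p) := by
    intro j d
    funext i
    have hs : HasFDerivAt (fun q => star (v j q i))
        (C.comp (fderiv ℝ (fun q => v j q i) p)) p :=
      (C.hasFDerivAt).comp p (hdiff j i).hasFDerivAt
    simp only [pdVstar, pdV, Pi.star_apply, hs.fderiv, ContinuousLinearMap.comp_apply]
    exact hCapp _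
  -- key identity from differentiating the orthonormality relations
  have key : ∀ (d : Phase n) (j k : Fin m),
      star (v j p) ⬝ᵥ pdV (v k) d p + star (pdV (v j) d p) ⬝ᵥ v k p = 0 := by
    intro d j k
    have hL : HasFDerivAt (fun q => ∑ i, star (v j q i) * v k q i)
        (∑ i, (star (v j p i) • fderiv ℝ (fun q => v k q i) p
          + v k p i • (C.comp (fderiv ℝ (fun q => v j q i) p)))) p := by
      apply HasFDerivAt.fun_sum
      intro i _
      exact ((C.hasFDerivAt).comp p (hdiff j i).hasFDerivAt).mul (hdiff k i).hasFDerivAt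
    have heq : (fun q => ∑ i, star (v j q i) * v k q i) =ᶠ[nhds p]
        (fun _ => (if j = k then (1:ℂ) else 0)) := by
      filter_upwards [hU.mem_nhds hp] with q hq
      simpa [dotProduct, Pi.star_apply] using hON q hq j k
    have h0 : fderiv ℝ (fun q => ∑ i, star (v j q i) * v k q i) p = 0 := by
      rw [heq.fderiv_eq]; exact fderiv_const_apply _
    have hzero : (∑ i, (star (v j p i) • fderiv ℝ (fun q => v k q i) p
          + v k p i • (C.comp (fderiv ℝ (fun q => v j q i) p)))) = 0 := by
      rw [← hL.fderiv, h0]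
    have h2 := congrArg (fun (L : Phase n →L[ℝ] ℂ) => L d) hzero
    simp only [ContinuousLinearMap.coe_sum', Finset.sum_apply,
      ContinuousLinearMap.add_apply, ContinuousLinearMap.smul_apply,
      ContinuousLinearMap.comp_apply, smul_eq_mul,
      ContinuousLinearMap.zero_apply] at h2
    calc star (v j p) ⬝ᵥ pdV (v k) d p + star (pdV (v j) d p) ⬝ᵥ v k p
        = ∑ i, (star (v j p i) * fderiv ℝ (fun q => v k q i) p d
            + v k p i * C (fderiv ℝ (fun q => v j q i) p d)) := by
          simp only [dotProduct, pdV, Pi.star_apply, Finset.sum_add_distrib, hCapp]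
          ring_nf
          congr 1
          exact Finset.sum_congr rfl fun i _ => by ring
      _ = 0 := h2
  -- completeness: rows orthonormal implies columns orthonormal
  have compl : ∀ i l : Fin m, ∑ k : Fin m, v k p i * star (v k p l)
      = if i = l then 1 else 0 := by
    intro i l
    set G : Matrix (Fin m) (Fin m) ℂ := Matrix.of (fun j i => v j p i) with hG
    have h1 : G * Gᴴ = 1 := by
      ext j k
      have h := hON p hp k j
      simp only [dotProduct, Pi.star_apply] at h
      simp only [Matrix.mul_apply, Matrix.conjTranspose_apply, Matrix.one_apply, hG,
        Matrix.of_apply]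
      rw [show ((if j = k then (1:ℂ) else 0) = if k = j then 1 else 0) by simp [eq_comm]]
      rw [← h]
      exact Finset.sum_congr rfl fun i _ => mul_comm _ _
    have h2 : Gᴴ * G = 1 := mul_eq_one_comm.mp h1
    have h3 := congrFun (congrFun h2 i) l
    simp only [Matrix.mul_apply, Matrix.conjTranspose_apply, Matrix.one_apply, hG,
      Matrix.of_apply] at h3
    have h4 := congrArg star h3
    rw [star_sum] at h4
    simpa [mul_comm] using h4
  -- expansion in the orthonormal basis
  have expand : ∀ a b : Fin m → ℂ,
      star a ⬝ᵥ b = ∑ k : Fin m, (star a ⬝ᵥ v k p) * (star (v k p) ⬝ᵥ b) := by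
    intro a b
    symm
    calc ∑ k : Fin m, (star a ⬝ᵥ v k p) * (star (v k p) ⬝ᵥ b)
        = ∑ k : Fin m, ∑ i : Fin m, ∑ l : Fin m,
            star (a i) * b l * (v k p i * star (v k p l)) := by
          refine Finset.sum_congr rfl fun k _ => ?_
          simp only [dotProduct, Pi.star_apply, Finset.sum_mul, Finset.mul_sum]
          rw [Finset.sum_comm]
          exact Finset.sum_congr rfl fun i _ => Finset.sum_congr rfl fun l _ => by ring
      _ = ∑ i : Fin m, ∑ l : Fin m, ∑ k : Fin m,
            star (a i) * b l * (v k p i * star (v k p l)) := by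
          rw [Finset.sum_comm]
          exact Finset.sum_congr rfl fun i _ => Finset.sum_comm
      _ = ∑ i : Fin m, ∑ l : Fin m,
            star (a i) * b l * (if i = l then 1 else 0) := by
          refine Finset.sum_congr rfl fun i _ => Finset.sum_congr rfl fun l _ => ?_
          rw [← Finset.mul_sum, compl i l]
      _ = ∑ i : Fin m, star (a i) * b i := by
          refine Finset.sum_congr rfl fun i _ => ?_
          simp
      _ = star a ⬝ᵥ b := rfl
  -- the main computation
  have hterm : ∀ d d' : Phase n, ∀ j : Fin m,
      star (pdV (v j) d p) ⬝ᵥ pdV (v j) d' p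
        = -∑ k : Fin m, (star (pdV (v j) d p) ⬝ᵥ v k p)
            * (star (pdV (v k) d' p) ⬝ᵥ v j p) := by
    intro d d' j
    rw [expand (pdV (v j) d p) (pdV (v j) d' p), ← Finset.sum_neg_distrib]
    refine Finset.sum_congr rfl fun k _ => ?_
    have hk := key d' k j
    have : star (v k p) ⬝ᵥ pdV (v j) d' p = -(star (pdV (v k) d' p) ⬝ᵥ v j p) := by
      linear_combination hk
    rw [this]; ring
  have final : ∀ α : Fin n,
      ∑ j : Fin m, (star (pdV (v j) (dX n α) p) ⬝ᵥ pdV (v j) (dXi n α) p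
        - star (pdV (v j) (dXi n α) p) ⬝ᵥ pdV (v j) (dX n α) p) = 0 := by
    intro α
    rw [Finset.sum_sub_distrib]
    rw [Finset.sum_congr rfl fun j _ => hterm (dX n α) (dXi n α) j,
        Finset.sum_congr rfl fun j _ => hterm (dXi n α) (dX n α) j]
    rw [Finset.sum_neg_distrib, Finset.sum_neg_distrib, sub_eq_zero, neg_inj,
      Finset.sum_comm]
    exact Finset.sum_congr rfl fun j _ => Finset.sum_congr rfl fun k _ => mul_comm _ _
  calc ∑ j : Fin m, sbrack (v j) p
      = ∑ α : Fin n, ∑ j : Fin m,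
          (star (pdV (v j) (dX n α) p) ⬝ᵥ pdV (v j) (dXi n α) p
            - star (pdV (v j) (dXi n α) p) ⬝ᵥ pdV (v j) (dX n α) p) := by
        unfold sbrack
        rw [Finset.sum_comm]
        exact Finset.sum_congr rfl fun α _ => Finset.sum_congr rfl fun j _ => by
          rw [hstar j (dX n α), hstar j (dXi n α)]
    _ = 0 := Finset.sum_eq_zero fun α _ => final α
end
end
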